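/- Let α be an infinite ordinal, let < be the ordinal membership relation on α, let ≤ be its reflexive closure, and let R be a binary relation on α with < ⊆ R ⊆ ≤. Then ¬B⁺ ∈ L(α,R) if and only if there is no function f : ℕ×ℕ → T satisfying (T1) and (T2); the same equivalence holds for L_c(α,R). -/

import Mathlib

namespace FOML

/-- First-order modal formulas over a signature assigning to each arity `n` a type
`Pred n` of `n`-ary predicate letters; individual variables are indexed by `ℕ`.
(0-ary predicate letters are proposition letters.) -/
inductive Fml (Pred : ℕ → Type) : Type
  | atom : {n : ℕ} → Pred n → (Fin n → ℕ) → Fml Pred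
  | bot  : Fml Pred
  | imp  : Fml Pred → Fml Pred → Fml Pred
  | box  : Fml Pred → Fml Pred
  | all  : ℕ → Fml Pred → Fml Pred

namespace Fml

variable {Pred : ℕ → Type}

def neg (φ : Fml Pred) : Fml Pred := imp φ bot
def top : Fml Pred := neg bot
def and (φ ψ : Fml Pred) : Fml Pred := neg (imp φ (neg ψ))
def or (φ ψ : Fml Pred) : Fml Pred := imp (neg φ) ψ
def iff (φ ψ : Fml Pred) : Fml Pred := and (imp φ ψ) (imp ψ φ)
def dia (φ : Fml Pred) : Fml Pred := neg (box (neg φ))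
def ex (x : ℕ) (φ : Fml Pred) : Fml Pred := neg (all x (neg φ))

def bigAnd : List (Fml Pred) → Fml Pred
  | [] => top
  | φ :: l => and φ (bigAnd l)

def bigOr : List (Fml Pred) → Fml Pred
  | [] => bot
  | φ :: l => or φ (bigOr l)

/-- Iterated box: `□⁰φ = φ`, `□ⁿ⁺¹φ = □□ⁿφ`. -/
def boxN : ℕ → Fml Pred → Fml Pred
  | 0, φ => φ
  | n + 1, φ => box (boxN n φ)

/-- Replace every occurrence of `□` by `□⁺`, where `□⁺ψ = ψ ∧ □ψ`
(equivalently, every `◇` by its dual `◇⁺ψ = ◇ψ ∨ ψ`). -/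
def plus : Fml Pred → Fml Pred
  | atom P a => atom P a
  | bot => bot
  | imp φ ψ => imp (plus φ) (plus ψ)
  | box φ => and (plus φ) (box (plus φ))
  | all x φ => all x (plus φ)

end Fml

/-- A Kripke model with expanding domains based on the frame `⟨W, R⟩`:
a domain function `D` into nonempty subsets of the domain `Dom`, expanding along `R`,
and an interpretation `I` of predicate letters at each world, with
`I(w,P) ⊆ D(w)ⁿ` for `n`-ary `P`. -/
structure KModel (W : Type*) (R : W → W → Prop) (Pred : ℕ → Type) where
  Dom : Type
  D : W → Set Dom
  D_ne : ∀ w, (D w).Nonempty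
  D_mono : ∀ ⦃w v : W⦄, R w v → D w ⊆ D v
  I : W → (n : ℕ) → Pred n → (Fin n → Dom) → Prop
  I_dom : ∀ (w : W) (n : ℕ) (P : Pred n) (as : Fin n → Dom), I w n P as → ∀ i, as i ∈ D w

variable {W : Type*} {R : W → W → Prop} {Pred : ℕ → Type}

/-- Truth of a formula at a world of a Kripke model under an assignment. -/
def truth (M : KModel W R Pred) : Fml Pred → W → (ℕ → M.Dom) → Prop
  | .atom (n := n) P args, w, g => M.I w n P (fun i => g (args i))
  | .bot, _, _ => False
  | .imp φ ψ, w, g => truth M φ w g → truth M ψ w g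
  | .box φ, w, g => ∀ v : W, R w v → truth M φ v g
  | .all x φ, w, g => ∀ d ∈ M.D w, truth M φ w (Function.update g x d)

/-- A formula is true at a world `w` if it is true under every assignment
taking values in the domain of `w`. -/
def trueAt (M : KModel W R Pred) (w : W) (φ : Fml Pred) : Prop :=
  ∀ g : ℕ → M.Dom, (∀ x, g x ∈ M.D w) → truth M φ w g

/-- `φ ∈ L(W,R)`: validity on the frame `⟨W,R⟩` (truth in every model with
expanding domains based on it, at every world). -/
def ValidOn (R : W → W → Prop) (φ : Fml Pred) : Prop :=
  ∀ (M : KModel W R Pred) (w : W), trueAt M w φ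

/-- The model has (globally) constant domains. -/
def ConstDom (M : KModel W R Pred) : Prop := ∀ w v : W, M.D w = M.D v

/-- `φ ∈ L_c(W,R)`: truth in every model with constant domains based on `⟨W,R⟩`. -/
def ValidOnC (R : W → W → Prop) (φ : Fml Pred) : Prop :=
  ∀ (M : KModel W R Pred), ConstDom M → ∀ w : W, trueAt M w φ

/-- A finite set `T = {t₀, …, t_s}` of tile types (represented as `Fin (s+1)`, with
`t₀ = 0`), each with four edge colours. -/
structure TileSet where
  s : ℕ
  left : Fin (s + 1) → ℕ
  right : Fin (s + 1) → ℕ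
  up : Fin (s + 1) → ℕ
  down : Fin (s + 1) → ℕ

namespace TileSet

/-- (T1): colours match horizontally. -/
def T1 (ts : TileSet) (f : ℕ → ℕ → Fin (ts.s + 1)) : Prop :=
  ∀ n m : ℕ, ts.right (f n m) = ts.left (f (n + 1) m)

/-- (T2): colours match vertically. -/
def T2 (ts : TileSet) (f : ℕ → ℕ → Fin (ts.s + 1)) : Prop :=
  ∀ n m : ℕ, ts.up (f n m) = ts.down (f n (m + 1))

/-- (T3): the tile type `t₀` occurs infinitely often in the leftmost column. -/
def T3 (ts : TileSet) (f : ℕ → ℕ → Fin (ts.s + 1)) : Prop :=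
  {m : ℕ | f 0 m = 0}.Infinite

end TileSet

/-- The predicate letters used in the encoding: a binary letter `◁`; monadic letters
`M`, `P₀, …, P_{s+2}` and `P`; proposition letters `p` and `q`. -/
inductive Letter (s : ℕ) : ℕ → Type
  | lt : Letter s 2
  | M : Letter s 1
  | P : Fin (s + 3) → Letter s 1
  | Pm : Letter s 1
  | p : Letter s 0
  | q : Letter s 0

namespace Enc

/-- Formulas in the language of the encoding. -/
abbrev F (ts : TileSet) := Fml (Letter ts.s)

/-- The list of all tile types. -/
def tiles (ts : TileSet) : List (Fin (ts.s + 1)) := List.finRange (ts.s + 1)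

/-- Tile indices regarded as indices of the letters `P₀, …, P_{s+2}`. -/
def tl (ts : TileSet) (t : Fin (ts.s + 1)) : Fin (ts.s + 3) := ⟨t.1, by omega⟩

def pp (ts : TileSet) : F ts := .atom Letter.p Fin.elim0
def qq (ts : TileSet) : F ts := .atom Letter.q Fin.elim0
def Mx (ts : TileSet) (v : ℕ) : F ts := .atom Letter.M (fun _ => v)
def Px (ts : TileSet) (j : Fin (ts.s + 3)) (v : ℕ) : F ts := .atom (Letter.P j) (fun _ => v)
def PP (ts : TileSet) (v : ℕ) : F ts := .atom Letter.Pm (fun _ => v)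
def ltA (ts : TileSet) (v w : ℕ) : F ts := .atom Letter.lt ![v, w]

/-- `⟐φ = ◇(π ∧ ◇(¬π ∧ φ))`, for a "marker" formula `π` (the paper uses `π = p`,
and `π = ∀x P(x)` for the operator `⊡`). -/
def pdia (ts : TileSet) (π φ : F ts) : F ts := .dia (.and π (.dia (.and (.neg π) φ)))

/-- Iterated `⟐`. -/
def pdiaN (ts : TileSet) (π : F ts) : ℕ → F ts → F ts
  | 0, φ => φ
  | n + 1, φ => pdia ts π (pdiaN ts π n φ)

/-- `U(x) = ⋀_{t ∈ T} ¬P_t(x)`, with the tile letters given by `Pf`. -/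
def Ug (ts : TileSet) (Pf : Fin (ts.s + 1) → ℕ → F ts) (v : ℕ) : F ts :=
  .bigAnd ((tiles ts).map (fun t => .neg (Pf t v)))

/- The conjuncts of the formula `A`, parametrised by the formulas standing for
`x ◁ y` (`rel`), `M(x)` (`Mf`), `P_t(x)` (`Pf`) and `p` (`pf`); the individual
variables `x`, `y` are `0`, `1`. -/

/-- `A₀ = ∃x □U(x)` -/
def A0g (ts : TileSet) (Pf : Fin (ts.s + 1) → ℕ → F ts) : F ts :=
  .ex 0 (.box (Ug ts Pf 0))

/-- `A₁ = ∃x(¬U(x) ∧ M(x))` -/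
def A1g (ts : TileSet) (Mf : ℕ → F ts) (Pf : Fin (ts.s + 1) → ℕ → F ts) : F ts :=
  .ex 0 (.and (.neg (Ug ts Pf 0)) (Mf 0))

/-- `A₂ = ∀x∃y (x ◁ y)` -/
def A2g (ts : TileSet) (rel : ℕ → ℕ → F ts) : F ts := .all 0 (.ex 1 (rel 0 1))

/-- `A₃ = ∀x∀y(x◁y → □(∃x M(x) → x◁y))` -/
def A3g (ts : TileSet) (rel : ℕ → ℕ → F ts) (Mf : ℕ → F ts) : F ts :=
  .all 0 (.all 1 (.imp (rel 0 1) (.box (.imp (.ex 0 (Mf 0)) (rel 0 1)))))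

/-- `A₄ = ∀x∀y(x◁y → □(M(x) ↔ ¬p ∧ ⟐M(y) ∧ ¬⟐²M(y)))` -/
def A4g (ts : TileSet) (rel : ℕ → ℕ → F ts) (Mf : ℕ → F ts) (pf : F ts) : F ts :=
  .all 0 (.all 1 (.imp (rel 0 1)
    (.box (.iff (Mf 0)
      (.and (.neg pf) (.and (pdia ts pf (Mf 1)) (.neg (pdiaN ts pf 2 (Mf 1)))))))))

/-- `A₅ = ∀x∀y □⋀_{t∈T}(M(x) ∧ P_t(y) → □(M(x) → P_t(y)))` -/
def A5g (ts : TileSet) (Mf : ℕ → F ts) (Pf : Fin (ts.s + 1) → ℕ → F ts) : F ts :=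
  .all 0 (.all 1 (.box (.bigAnd ((tiles ts).map fun t =>
    .imp (.and (Mf 0) (Pf t 1)) (.box (.imp (Mf 0) (Pf t 1)))))))

/-- `A₆ = ∀x □⋀_{t∈T}(P_t(x) → ⋀_{t'≠t} ¬P_{t'}(x))` -/
def A6g (ts : TileSet) (Pf : Fin (ts.s + 1) → ℕ → F ts) : F ts :=
  .all 0 (.box (.bigAnd ((tiles ts).map fun t =>
    .imp (Pf t 0)
      (.bigAnd (((tiles ts).filter (fun t' => decide (t' ≠ t))).map fun t' => .neg (Pf t' 0))))))

/-- `A₇ = ∀x∀y □⋀_{t∈T}(x◁y ∧ P_t(x) → ⋁_{right(t)=left(t')} P_{t'}(y))` -/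
def A7g (ts : TileSet) (rel : ℕ → ℕ → F ts) (Pf : Fin (ts.s + 1) → ℕ → F ts) : F ts :=
  .all 0 (.all 1 (.box (.bigAnd ((tiles ts).map fun t =>
    .imp (.and (rel 0 1) (Pf t 0))
      (.bigOr (((tiles ts).filter fun t' => decide (ts.right t = ts.left t')).map
        fun t' => Pf t' 1))))))

/-- `A₈ = ∀x∀y □⋀_{t∈T}(M(x) ∧ P_t(y) → □(∃y(x◁y ∧ M(y)) → ⋁_{up(t)=down(t')} P_{t'}(y)))` -/
def A8g (ts : TileSet) (rel : ℕ → ℕ → F ts) (Mf : ℕ → F ts)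
    (Pf : Fin (ts.s + 1) → ℕ → F ts) : F ts :=
  .all 0 (.all 1 (.box (.bigAnd ((tiles ts).map fun t =>
    .imp (.and (Mf 0) (Pf t 1))
      (.box (.imp (.ex 1 (.and (rel 0 1) (Mf 1)))
        (.bigOr (((tiles ts).filter fun t' => decide (ts.up t = ts.down t')).map
          fun t' => Pf t' 1))))))))

/-- `A₉ = ∀x(M(x) → □⟐P_{t₀}(x))` -/
def A9g (ts : TileSet) (Mf : ℕ → F ts) (Pf : Fin (ts.s + 1) → ℕ → F ts) (pf : F ts) : F ts :=
  .all 0 (.imp (Mf 0) (.box (pdia ts pf (Pf 0 0))))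

/-- The list `[A₀, …, A₈]` (all conjuncts of `A` except `A₉`), parametrised. -/
def AlistB (ts : TileSet) (rel : ℕ → ℕ → F ts) (Mf : ℕ → F ts)
    (Pf : Fin (ts.s + 1) → ℕ → F ts) (pf : F ts) : List (F ts) :=
  [A0g ts Pf, A1g ts Mf Pf, A2g ts rel, A3g ts rel Mf, A4g ts rel Mf pf,
   A5g ts Mf Pf, A6g ts Pf, A7g ts rel Pf, A8g ts rel Mf Pf]

/-- The tile letters `P_{t₀}, …, P_{t_s}`, i.e. `P₀, …, P_s`. -/
def PfA (ts : TileSet) : Fin (ts.s + 1) → ℕ → F ts := fun t v => Px ts (tl ts t) v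

/-- The formula `A`: the conjunction of `A₀` through `A₉`. -/
def A (ts : TileSet) : F ts :=
  .bigAnd (AlistB ts (ltA ts) (Mx ts) (PfA ts) (pp ts) ++
    [A9g ts (Mx ts) (PfA ts) (pp ts)])

/-- The formula `B`: the conjunction of `A₀` through `A₈`. -/
def B (ts : TileSet) : F ts := .bigAnd (AlistB ts (ltA ts) (Mx ts) (PfA ts) (pp ts))

/-- `A₉• = ∀x(M(x) → □(∃y M(y) → ⟐(∃y M(y) → P_{t₀}(x))))` -/
def A9bul (ts : TileSet) : F ts :=
  .all 0 (.imp (Mx ts 0) (.box (.imp (.ex 1 (Mx ts 1))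
    (pdia ts (pp ts) (.imp (.ex 1 (Mx ts 1)) (PfA ts 0 0))))))

/-- The formula `A•`: the conjunction of `A₀` through `A₈` together with `A₉•`. -/
def Abullet (ts : TileSet) : F ts :=
  .bigAnd (AlistB ts (ltA ts) (Mx ts) (PfA ts) (pp ts) ++ [A9bul ts])

/-- `⟐(P_{s+1}(x) ∧ P_{s+2}(y))`, the formula substituted for `x ◁ y` in `A′`. -/
def relA' (ts : TileSet) (v w : ℕ) : F ts :=
  pdia ts (pp ts) (.and (Px ts ⟨ts.s + 1, by omega⟩ v) (Px ts ⟨ts.s + 2, by omega⟩ w))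

/-- The formula `A′`: the result of substituting `⟐(P_{s+1}(x) ∧ P_{s+2}(y))` for
`x ◁ y` throughout `A`. -/
def A' (ts : TileSet) : F ts :=
  .bigAnd (AlistB ts (relA' ts) (Mx ts) (PfA ts) (pp ts) ++
    [A9g ts (Mx ts) (PfA ts) (pp ts)])

/-- `∀x P(x)`, the marker formula of the operator `⊡`. -/
def pfS (ts : TileSet) : F ts := .all 0 (PP ts 0)

/-- `⊡φ = ◇(∀x P(x) ∧ ◇(¬∀x P(x) ∧ φ))`. -/
def bdia (ts : TileSet) (φ : F ts) : F ts := pdia ts (pfS ts) φ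

/-- Iterated `⊡`. -/
def bdiaN (ts : TileSet) (n : ℕ) (φ : F ts) : F ts := pdiaN ts (pfS ts) n φ

/-- `q ∧ P(v)`, the replacement of `M(v)`. -/
def MS (ts : TileSet) (v : ℕ) : F ts := .and (qq ts) (PP ts v)

/-- `βₙ(x) = ∃y(⊡^{s+4}(q ∧ P(y)) ∧ ¬⊡^{s+5}(q ∧ P(y)) ∧
⊡(⊡^{n+1}(q ∧ P(y)) ∧ ¬⊡^{n+2}(q ∧ P(y)) ∧ P(x)))`, and `βₙ(y)` with `x`, `y` exchanged
(the variables `x`, `y` are `0`, `1`, so the bound variable is `1 - v`). -/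
def beta (ts : TileSet) (n : Fin (ts.s + 3)) (v : ℕ) : F ts :=
  .ex (1 - v) (.and (bdiaN ts (ts.s + 4) (MS ts (1 - v)))
    (.and (.neg (bdiaN ts (ts.s + 5) (MS ts (1 - v))))
      (bdia ts (.and (bdiaN ts ((n : ℕ) + 1) (MS ts (1 - v)))
        (.and (.neg (bdiaN ts ((n : ℕ) + 2) (MS ts (1 - v)))) (PP ts v))))))

/-- The replacement `βₜ` of the tile letters. -/
def PfS (ts : TileSet) : Fin (ts.s + 1) → ℕ → F ts := fun t v => beta ts (tl ts t) v

/-- `⊡(β_{s+1}(x) ∧ β_{s+2}(y))`, the replacement of `x ◁ y` in `A*`. -/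
def relS (ts : TileSet) (v w : ℕ) : F ts :=
  bdia ts (.and (beta ts ⟨ts.s + 1, by omega⟩ v) (beta ts ⟨ts.s + 2, by omega⟩ w))

/-- `A₄* = ∀x∀y(⊡(β_{s+1}(x) ∧ β_{s+2}(y)) →
□(q ∧ P(x) ↔ ¬∀x P(x) ∧ ⊡^{s+4}(q ∧ P(y)) ∧ ¬⊡^{s+5}(q ∧ P(y))))` -/
def A4star (ts : TileSet) : F ts :=
  .all 0 (.all 1 (.imp (relS ts 0 1)
    (.box (.iff (MS ts 0)
      (.and (.neg (pfS ts))
        (.and (bdiaN ts (ts.s + 4) (MS ts 1)) (.neg (bdiaN ts (ts.s + 5) (MS ts 1)))))))))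

/-- `A₉* = ∀x(q ∧ P(x) → □⊡β₀(x))` -/
def A9star (ts : TileSet) : F ts :=
  .all 0 (.imp (MS ts 0) (.box (bdia ts (beta ts ⟨0, by omega⟩ 0))))

/-- The list `[A₀*, …, A₈*]`. -/
def BstarList (ts : TileSet) : List (F ts) :=
  [A0g ts (PfS ts), A1g ts (MS ts) (PfS ts), A2g ts (relS ts), A3g ts (relS ts) (MS ts),
   A4star ts, A5g ts (MS ts) (PfS ts), A6g ts (PfS ts), A7g ts (relS ts) (PfS ts),
   A8g ts (relS ts) (MS ts) (PfS ts)]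

/-- The formula `A*`: the conjunction of `A₀*` through `A₉*`. -/
def Astar (ts : TileSet) : F ts := .bigAnd (BstarList ts ++ [A9star ts])

/-- The formula `B*`: the conjunction of `A₀*` through `A₈*`. -/
def Bstar (ts : TileSet) : F ts := .bigAnd (BstarList ts)

/-- The formula `A⁺`: the result of replacing every `□` in `A*` by `□⁺`. -/
def Aplus (ts : TileSet) : F ts := (Astar ts).plus

/-- The formula `B⁺`: the result of replacing every `□` in `B*` by `□⁺`. -/
def Bplus (ts : TileSet) : F ts := (Bstar ts).plus

end Enc

end FOML
namespace FOML
open Enc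
section Aux

variable {W : Type*} {S : W → W → Prop} {Pred : ℕ → Type}

section TruthLemmas
variable {M : KModel W S Pred}

theorem truth_neg {φ : Fml Pred} {w : W} {g : ℕ → M.Dom} :
    truth M (Fml.neg φ) w g ↔ ¬ truth M φ w g := Iff.rfl

theorem truth_and {φ ψ : Fml Pred} {w : W} {g : ℕ → M.Dom} :
    truth M (Fml.and φ ψ) w g ↔ truth M φ w g ∧ truth M ψ w g := by
  simp only [Fml.and, Fml.neg, truth]; tauto

theorem truth_top {w : W} {g : ℕ → M.Dom} : truth M Fml.top w g := by
  simp only [Fml.top, Fml.neg, truth]; exact id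

theorem truth_or {φ ψ : Fml Pred} {w : W} {g : ℕ → M.Dom} :
    truth M (Fml.or φ ψ) w g ↔ truth M φ w g ∨ truth M ψ w g := by
  simp only [Fml.or, Fml.neg, truth]; tauto

theorem truth_iff {φ ψ : Fml Pred} {w : W} {g : ℕ → M.Dom} :
    truth M (Fml.iff φ ψ) w g ↔ (truth M φ w g ↔ truth M ψ w g) := by
  simp only [Fml.iff, Fml.and, Fml.neg, truth]; tauto

theorem truth_ex {x : ℕ} {φ : Fml Pred} {w : W} {g : ℕ → M.Dom} :
    truth M (Fml.ex x φ) w g ↔ ∃ d ∈ M.D w, truth M φ w (Function.update g x d) := by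
  simp only [Fml.ex, Fml.neg, truth]
  constructor
  · intro h
    by_contra hc
    push_neg at hc
    exact h fun d hd ht => hc d hd ht
  · rintro ⟨d, hd, ht⟩ h
    exact h d hd ht

theorem truth_dia {φ : Fml Pred} {w : W} {g : ℕ → M.Dom} :
    truth M (Fml.dia φ) w g ↔ ∃ v, S w v ∧ truth M φ v g := by
  simp only [Fml.dia, Fml.neg, truth]
  constructor
  · intro h
    by_contra hc
    push_neg at hc
    exact h fun v hv ht => hc v hv ht
  · rintro ⟨v, hv, ht⟩ h
    exact h v hv ht

theorem truth_box {φ : Fml Pred} {w : W} {g : ℕ → M.Dom} :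
    truth M (Fml.box φ) w g ↔ ∀ v, S w v → truth M φ v g := Iff.rfl

theorem truth_all {x : ℕ} {φ : Fml Pred} {w : W} {g : ℕ → M.Dom} :
    truth M (Fml.all x φ) w g ↔ ∀ d ∈ M.D w, truth M φ w (Function.update g x d) := Iff.rfl

theorem truth_imp {φ ψ : Fml Pred} {w : W} {g : ℕ → M.Dom} :
    truth M (Fml.imp φ ψ) w g ↔ (truth M φ w g → truth M ψ w g) := Iff.rfl

theorem truth_bigAnd {l : List (Fml Pred)} {w : W} {g : ℕ → M.Dom} :
    truth M (Fml.bigAnd l) w g ↔ ∀ φ ∈ l, truth M φ w g := by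
  induction l with
  | nil => simpa [Fml.bigAnd] using truth_top
  | cons a l ih => simp [Fml.bigAnd, truth_and, ih]

theorem truth_bigOr {l : List (Fml Pred)} {w : W} {g : ℕ → M.Dom} :
    truth M (Fml.bigOr l) w g ↔ ∃ φ ∈ l, truth M φ w g := by
  induction l with
  | nil => simp [Fml.bigOr, truth]
  | cons a l ih => simp [Fml.bigOr, truth_or, ih]

end TruthLemmas

/-- Truth relative only to the interpretational data (no monotonicity proofs). -/
def truthP (Dom : Type) (D : W → Set Dom)
    (I : W → (n : ℕ) → Pred n → (Fin n → Dom) → Prop) (S : W → W → Prop) :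
    Fml Pred → W → (ℕ → Dom) → Prop
  | .atom (n := n) P args, w, g => I w n P (fun i => g (args i))
  | .bot, _, _ => False
  | .imp φ ψ, w, g => truthP Dom D I S φ w g → truthP Dom D I S ψ w g
  | .box φ, w, g => ∀ v : W, S w v → truthP Dom D I S φ v g
  | .all x φ, w, g => ∀ d ∈ D w, truthP Dom D I S φ w (Function.update g x d)

theorem truth_eq_truthP (M : KModel W S Pred) :
    ∀ (φ : Fml Pred) (w : W) (g : ℕ → M.Dom),
      truth M φ w g ↔ truthP M.Dom M.D M.I S φ w g := by
  intro φ
  induction φ with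
  | atom P args => intro w g; exact Iff.rfl
  | bot => intro w g; exact Iff.rfl
  | imp φ ψ ihφ ihψ => intro w g; exact imp_congr (ihφ w g) (ihψ w g)
  | box φ ih =>
      intro w g
      exact forall_congr' fun v => imp_congr Iff.rfl (ih v g)
  | all x φ ih =>
      intro w g
      exact forall_congr' fun d => imp_congr Iff.rfl (ih w _)

theorem truthP_plus {R : W → W → Prop} (hS : ∀ w v : W, S w v ↔ (w = v ∨ R w v))
    {Dom : Type} {D : W → Set Dom} {I : W → (n : ℕ) → Pred n → (Fin n → Dom) → Prop} :
    ∀ (φ : Fml Pred) (w : W) (g : ℕ → Dom),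
      truthP Dom D I R (Fml.plus φ) w g ↔ truthP Dom D I S φ w g := by
  intro φ
  induction φ with
  | atom P args => intro w g; exact Iff.rfl
  | bot => intro w g; exact Iff.rfl
  | imp φ ψ ihφ ihψ => intro w g; exact imp_congr (ihφ w g) (ihψ w g)
  | box φ ih =>
      intro w g
      show truthP Dom D I R (Fml.and (Fml.plus φ) (Fml.box (Fml.plus φ))) w g ↔ _
      have hand : truthP Dom D I R (Fml.and (Fml.plus φ) (Fml.box (Fml.plus φ))) w g ↔
          truthP Dom D I R (Fml.plus φ) w g ∧
            ∀ v, R w v → truthP Dom D I R (Fml.plus φ) v g := by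
        simp only [Fml.and, Fml.neg, truthP]; tauto
      rw [hand]
      constructor
      · rintro ⟨h0, h1⟩ v hv
        rcases (hS w v).1 hv with rfl | hv'
        · exact (ih _ g).1 h0
        · exact (ih v g).1 (h1 v hv')
      · intro h
        refine ⟨(ih w g).2 (h w ((hS w w).2 (Or.inl rfl))), fun v hv => (ih v g).2 ?_⟩
        exact h v ((hS w v).2 (Or.inr hv))
  | all x φ ih =>
      intro w g
      exact forall_congr' fun d => imp_congr Iff.rfl (ih w _)

end Aux
section Sem

variable {W : Type*} {S : W → W → Prop} {ts : TileSet}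

/-- Marker: `∀x P(x)` holds at `w`. -/
def mkS (M : KModel W S (Letter ts.s)) (w : W) : Prop :=
  ∀ d ∈ M.D w, M.I w 1 Letter.Pm (fun _ => d)

/-- `q ∧ P(d)` at `w`. -/
def qpS (M : KModel W S (Letter ts.s)) (d : M.Dom) (w : W) : Prop :=
  M.I w 0 Letter.q (fun i => i.elim0) ∧ M.I w 1 Letter.Pm (fun _ => d)

/-- `P(d)` at `w`. -/
def pPS (M : KModel W S (Letter ts.s)) (d : M.Dom) (w : W) : Prop :=
  M.I w 1 Letter.Pm (fun _ => d)

/-- Semantic iterated `⊡`. -/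
def BDS (M : KModel W S (Letter ts.s)) : ℕ → (W → Prop) → W → Prop
  | 0, χ, w => χ w
  | k+1, χ, w => ∃ u, S w u ∧ mkS M u ∧ ∃ v, S u v ∧ ¬ mkS M v ∧ BDS M k χ v

/-- Semantic `βₙ(d)` at `w`. -/
def BtS (M : KModel W S (Letter ts.s)) (n : ℕ) (d : M.Dom) (w : W) : Prop :=
  ∃ e ∈ M.D w, BDS M (ts.s+4) (qpS M e) w ∧ ¬ BDS M (ts.s+5) (qpS M e) w ∧
    BDS M 1 (fun v => BDS M (n+1) (qpS M e) v ∧ ¬ BDS M (n+2) (qpS M e) v ∧ pPS M d v) w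

/-- Semantic `x ◁ y` at `w`. -/
def RlS (M : KModel W S (Letter ts.s)) (x y : M.Dom) (w : W) : Prop :=
  BDS M 1 (fun v => BtS M (ts.s+1) x v ∧ BtS M (ts.s+2) y v) w

variable {M : KModel W S (Letter ts.s)}

theorem BDS_congr {k : ℕ} {χ χ' : W → Prop} (h : ∀ v, χ v ↔ χ' v) {w : W} :
    BDS M k χ w ↔ BDS M k χ' w := by
  induction k generalizing w with
  | zero => exact h w
  | succ k ih =>
    simp only [BDS]
    exact exists_congr fun u => and_congr_right fun _ => and_congr_right fun _ =>
      exists_congr fun v => and_congr_right fun _ => and_congr_right fun _ => ih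

theorem BDS_one {χ : W → Prop} {w : W} :
    BDS M 1 χ w ↔ ∃ u, S w u ∧ mkS M u ∧ ∃ v, S u v ∧ ¬ mkS M v ∧ χ v := Iff.rfl

theorem truth_pfS {w : W} {g : ℕ → M.Dom} : truth M (pfS ts) w g ↔ mkS M w := by
  simp only [pfS, PP, truth_all, truth, mkS, Function.update_self]

theorem truth_qq {w : W} {g : ℕ → M.Dom} :
    truth M (qq ts) w g ↔ M.I w 0 Letter.q (fun i => i.elim0) := by
  simp only [qq, truth]
  rw [funext (fun i : Fin 0 => i.elim0 : ∀ i : Fin 0, g (Fin.elim0 i) = i.elim0)]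

theorem truth_PP {x : ℕ} {w : W} {g : ℕ → M.Dom} :
    truth M (PP ts x) w g ↔ pPS M (g x) w := Iff.rfl

theorem truth_MS {x : ℕ} {w : W} {g : ℕ → M.Dom} :
    truth M (MS ts x) w g ↔ qpS M (g x) w := by
  simp only [MS, truth_and, truth_qq, truth_PP, qpS, pPS]

theorem truth_bdia {φ : F ts} {w : W} {g : ℕ → M.Dom} :
    truth M (bdia ts φ) w g ↔
      ∃ u, S w u ∧ mkS M u ∧ ∃ v, S u v ∧ ¬ mkS M v ∧ truth M φ v g := by
  simp only [bdia, pdia, truth_dia, truth_and, truth_neg, truth_pfS]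

theorem truth_bdiaN {k : ℕ} {φ : F ts} {w : W} {g : ℕ → M.Dom} :
    truth M (bdiaN ts k φ) w g ↔ BDS M k (fun v => truth M φ v g) w := by
  induction k generalizing w with
  | zero => exact Iff.rfl
  | succ k ih =>
    show truth M (bdia ts (bdiaN ts k φ)) w g ↔ _
    simp only [truth_bdia, BDS, ih]

theorem truth_beta {n : Fin (ts.s+3)} {x : ℕ} {w : W} {g : ℕ → M.Dom} :
    truth M (beta ts n x) w g ↔ BtS M n.1 (g x) w := by
  have hx : x ≠ (1 - x) := by omega
  simp only [beta, truth_ex, truth_and, truth_neg, truth_bdia, truth_bdiaN, truth_MS,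
    truth_PP, Function.update_self, Function.update_of_ne hx, BtS, BDS_one]

theorem truth_PfS {t : Fin (ts.s+1)} {x : ℕ} {w : W} {g : ℕ → M.Dom} :
    truth M (PfS ts t x) w g ↔ BtS M t.1 (g x) w := by
  rw [show PfS ts t x = beta ts (tl ts t) x from rfl, truth_beta]; rfl

theorem truth_relS {x y : ℕ} {w : W} {g : ℕ → M.Dom} :
    truth M (relS ts x y) w g ↔ RlS M (g x) (g y) w := by
  simp only [relS, truth_bdia, truth_and, truth_beta, RlS, BDS_one]

end Sem
section AxChar

variable {W : Type*} {S : W → W → Prop} {ts : TileSet} {M : KModel W S (Letter ts.s)}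
variable {w : W} {g : ℕ → M.Dom}

theorem truth_Ug {x : ℕ} :
    truth M (Ug ts (PfS ts) x) w g ↔ ∀ t : Fin (ts.s+1), ¬ BtS M t.1 (g x) w := by
  simp only [Ug, truth_bigAnd, List.mem_map, tiles]
  constructor
  · intro h t
    have := h _ ⟨t, List.mem_finRange t, rfl⟩
    rw [truth_neg, truth_PfS] at this
    exact this
  · rintro h φ ⟨t, -, rfl⟩
    rw [truth_neg, truth_PfS]
    exact h t

theorem truth_A0 :
    truth M (A0g ts (PfS ts)) w g ↔
      ∃ d ∈ M.D w, ∀ v, S w v → ∀ t : Fin (ts.s+1), ¬ BtS M t.1 d v := by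
  simp only [A0g, truth_ex, truth_box, truth_Ug, Function.update_self]

theorem truth_A1 :
    truth M (A1g ts (MS ts) (PfS ts)) w g ↔
      ∃ d ∈ M.D w, (∃ t : Fin (ts.s+1), BtS M t.1 d w) ∧ qpS M d w := by
  simp only [A1g, truth_ex, truth_and, truth_neg, truth_Ug, truth_MS, Function.update_self,
    not_forall, not_not]

theorem truth_A2 :
    truth M (A2g ts (relS ts)) w g ↔ ∀ d ∈ M.D w, ∃ e ∈ M.D w, RlS M d e w := by
  have h01 : (1:ℕ) ≠ 0 := by omega
  have h10 : (0:ℕ) ≠ 1 := by omega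
  simp only [A2g, truth_all, truth_ex, truth_relS, Function.update_self,
    Function.update_of_ne h01, Function.update_of_ne h10]

theorem truth_A3 :
    truth M (A3g ts (relS ts) (MS ts)) w g ↔
      ∀ d ∈ M.D w, ∀ e ∈ M.D w, RlS M d e w →
        ∀ v, S w v → (∃ z ∈ M.D v, qpS M z v) → RlS M d e v := by
  have h01 : (1:ℕ) ≠ 0 := by omega
  have h10 : (0:ℕ) ≠ 1 := by omega
  simp only [A3g, truth_all, truth_imp, truth_box, truth_ex, truth_relS, truth_MS,
    Function.update_self, Function.update_of_ne h01, Function.update_of_ne h10]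

theorem truth_A4 :
    truth M (A4star ts) w g ↔
      ∀ d ∈ M.D w, ∀ e ∈ M.D w, RlS M d e w →
        ∀ v, S w v →
          (qpS M d v ↔ ¬ mkS M v ∧ BDS M (ts.s+4) (qpS M e) v ∧
            ¬ BDS M (ts.s+5) (qpS M e) v) := by
  have h01 : (1:ℕ) ≠ 0 := by omega
  have h10 : (0:ℕ) ≠ 1 := by omega
  simp only [A4star, truth_all, truth_imp, truth_box, truth_iff, truth_and, truth_neg,
    truth_relS, truth_MS, truth_pfS, truth_bdiaN, Function.update_self,
    Function.update_of_ne h01, Function.update_of_ne h10]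

theorem truth_A5 :
    truth M (A5g ts (MS ts) (PfS ts)) w g ↔
      ∀ d ∈ M.D w, ∀ e ∈ M.D w, ∀ v, S w v → ∀ t : Fin (ts.s+1),
        qpS M d v ∧ BtS M t.1 e v → ∀ u, S v u → qpS M d u → BtS M t.1 e u := by
  have h01 : (1:ℕ) ≠ 0 := by omega
  have h10 : (0:ℕ) ≠ 1 := by omega
  simp only [A5g, truth_all, truth_box, truth_bigAnd, List.mem_map, tiles]
  constructor
  · intro h d hd e he v hv t ⟨h1, h2⟩ u hu h3
    have := h d hd e he v hv _ ⟨t, List.mem_finRange t, rfl⟩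
    rw [truth_imp, truth_and, truth_MS, truth_PfS] at this
    simp only [Function.update_self, Function.update_of_ne h01, Function.update_of_ne h10] at this
    have := this ⟨h1, h2⟩ u hu
    rw [truth_imp, truth_MS, truth_PfS] at this
    simp only [Function.update_self, Function.update_of_ne h01, Function.update_of_ne h10] at this
    exact this h3
  · rintro h d hd e he v hv φ ⟨t, -, rfl⟩
    rw [truth_imp, truth_and, truth_MS, truth_PfS]
    simp only [Function.update_self, Function.update_of_ne h01, Function.update_of_ne h10]
    intro ⟨h1, h2⟩ u hu
    rw [truth_imp, truth_MS, truth_PfS]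
    simp only [Function.update_self, Function.update_of_ne h01, Function.update_of_ne h10]
    exact fun h3 => h d hd e he v hv t ⟨h1, h2⟩ u hu h3

theorem truth_A6 :
    truth M (A6g ts (PfS ts)) w g ↔
      ∀ d ∈ M.D w, ∀ v, S w v → ∀ t : Fin (ts.s+1),
        BtS M t.1 d v → ∀ t' : Fin (ts.s+1), t' ≠ t → ¬ BtS M t'.1 d v := by
  simp only [A6g, truth_all, truth_box, truth_bigAnd, List.mem_map, tiles]
  constructor
  · intro h d hd v hv t ht t' hne
    have := h d hd v hv _ ⟨t, List.mem_finRange t, rfl⟩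
    rw [truth_imp, truth_PfS] at this
    simp only [Function.update_self] at this
    have := this ht
    rw [truth_bigAnd] at this
    have := this _ (List.mem_map.2 ⟨t', List.mem_filter.2 ⟨List.mem_finRange t',
      by simpa using hne⟩, rfl⟩)
    rw [truth_neg, truth_PfS] at this
    simpa using this
  · rintro h d hd v hv φ ⟨t, -, rfl⟩
    rw [truth_imp, truth_PfS]
    simp only [Function.update_self]
    intro ht
    rw [truth_bigAnd]
    rintro φ' hφ'
    rcases List.mem_map.1 hφ' with ⟨t', ht', rfl⟩
    have hne : t' ≠ t := by simpa using (List.mem_filter.1 ht').2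
    rw [truth_neg, truth_PfS]
    simpa using h d hd v hv t ht t' hne

theorem truth_A7 :
    truth M (A7g ts (relS ts) (PfS ts)) w g ↔
      ∀ d ∈ M.D w, ∀ e ∈ M.D w, ∀ v, S w v → ∀ t : Fin (ts.s+1),
        RlS M d e v ∧ BtS M t.1 d v →
          ∃ t' : Fin (ts.s+1), ts.right t = ts.left t' ∧ BtS M t'.1 e v := by
  have h01 : (1:ℕ) ≠ 0 := by omega
  have h10 : (0:ℕ) ≠ 1 := by omega
  simp only [A7g, truth_all, truth_box, truth_bigAnd, List.mem_map, tiles]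
  constructor
  · intro h d hd e he v hv t ⟨h1, h2⟩
    have := h d hd e he v hv _ ⟨t, List.mem_finRange t, rfl⟩
    rw [truth_imp, truth_and, truth_relS, truth_PfS] at this
    simp only [Function.update_self, Function.update_of_ne h01, Function.update_of_ne h10] at this
    have := this ⟨h1, h2⟩
    rw [truth_bigOr] at this
    rcases this with ⟨φ', hφ', hT⟩
    rcases List.mem_map.1 hφ' with ⟨t', ht', rfl⟩
    rw [truth_PfS] at hT
    simp only [Function.update_self, Function.update_of_ne h01, Function.update_of_ne h10] at hT
    exact ⟨t', by simpa using (List.mem_filter.1 ht').2, hT⟩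
  · rintro h d hd e he v hv φ ⟨t, -, rfl⟩
    rw [truth_imp, truth_and, truth_relS, truth_PfS]
    simp only [Function.update_self, Function.update_of_ne h01, Function.update_of_ne h10]
    intro ⟨h1, h2⟩
    rcases h d hd e he v hv t ⟨h1, h2⟩ with ⟨t', hmatch, hT⟩
    rw [truth_bigOr]
    refine ⟨_, List.mem_map.2 ⟨t', List.mem_filter.2 ⟨List.mem_finRange t',
      by simpa using hmatch⟩, rfl⟩, ?_⟩
    rw [truth_PfS]
    simpa [Function.update_self, Function.update_of_ne h01, Function.update_of_ne h10] using hT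

theorem truth_A8 :
    truth M (A8g ts (relS ts) (MS ts) (PfS ts)) w g ↔
      ∀ d ∈ M.D w, ∀ e ∈ M.D w, ∀ v, S w v → ∀ t : Fin (ts.s+1),
        qpS M d v ∧ BtS M t.1 e v → ∀ u, S v u →
          (∃ z ∈ M.D u, RlS M d z u ∧ qpS M z u) →
            ∃ t' : Fin (ts.s+1), ts.up t = ts.down t' ∧ BtS M t'.1 e u := by
  have h01 : (1:ℕ) ≠ 0 := by omega
  have h10 : (0:ℕ) ≠ 1 := by omega
  simp only [A8g, truth_all, truth_box, truth_bigAnd, List.mem_map, tiles]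
  constructor
  · intro h d hd e he v hv t ⟨h1, h2⟩ u hu hz
    have := h d hd e he v hv _ ⟨t, List.mem_finRange t, rfl⟩
    rw [truth_imp, truth_and, truth_MS, truth_PfS] at this
    simp only [Function.update_self, Function.update_of_ne h01, Function.update_of_ne h10] at this
    have := this ⟨h1, h2⟩ u hu
    rw [truth_imp, truth_ex] at this
    have hprem : ∃ z ∈ M.D u, truth M (Fml.and (relS ts 0 1) (MS ts 1)) u
        (Function.update (Function.update (Function.update g 0 d) 1 e) 1 z) := by
      rcases hz with ⟨z, hzD, hzR, hzq⟩
      refine ⟨z, hzD, ?_⟩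
      rw [truth_and, truth_relS, truth_MS]
      simp only [Function.update_idem, Function.update_self, Function.update_of_ne h01,
        Function.update_of_ne h10]
      exact ⟨hzR, hzq⟩
    have := this hprem
    rw [truth_bigOr] at this
    rcases this with ⟨φ', hφ', hT⟩
    rcases List.mem_map.1 hφ' with ⟨t', ht', rfl⟩
    rw [truth_PfS] at hT
    simp only [Function.update_self, Function.update_of_ne h01, Function.update_of_ne h10] at hT
    exact ⟨t', by simpa using (List.mem_filter.1 ht').2, hT⟩
  · rintro h d hd e he v hv φ ⟨t, -, rfl⟩
    rw [truth_imp, truth_and, truth_MS, truth_PfS]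
    simp only [Function.update_self, Function.update_of_ne h01, Function.update_of_ne h10]
    intro ⟨h1, h2⟩ u hu
    rw [truth_imp, truth_ex]
    rintro ⟨z, hzD, hzb⟩
    rw [truth_and, truth_relS, truth_MS] at hzb
    simp only [Function.update_idem, Function.update_self, Function.update_of_ne h01,
      Function.update_of_ne h10] at hzb
    rcases h d hd e he v hv t ⟨h1, h2⟩ u hu ⟨z, hzD, hzb.1, hzb.2⟩ with ⟨t', hmatch, hT⟩
    rw [truth_bigOr]
    refine ⟨_, List.mem_map.2 ⟨t', List.mem_filter.2 ⟨List.mem_finRange t',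
      by simpa using hmatch⟩, rfl⟩, ?_⟩
    rw [truth_PfS]
    simpa [Function.update_self, Function.update_of_ne h01, Function.update_of_ne h10] using hT

theorem truth_Bstar :
    truth M (Bstar ts) w g ↔
      truth M (A0g ts (PfS ts)) w g ∧
      truth M (A1g ts (MS ts) (PfS ts)) w g ∧
      truth M (A2g ts (relS ts)) w g ∧
      truth M (A3g ts (relS ts) (MS ts)) w g ∧
      truth M (A4star ts) w g ∧
      truth M (A5g ts (MS ts) (PfS ts)) w g ∧
      truth M (A6g ts (PfS ts)) w g ∧
      truth M (A7g ts (relS ts) (PfS ts)) w g ∧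
      truth M (A8g ts (relS ts) (MS ts) (PfS ts)) w g := by
  simp only [Bstar, BstarList, Fml.bigAnd, truth_and]
  have : truth M (Fml.top : F ts) w g := truth_top
  tauto

end AxChar
section Extraction

variable {W : Type*} {S : W → W → Prop} {ts : TileSet} {M : KModel W S (Letter ts.s)}

theorem BDS_exists (hrefl : ∀ w : W, S w w)
    (htrans : ∀ {a b c : W}, S a b → S b c → S a c)
    {k : ℕ} {χ : W → Prop} {w : W} (h : BDS M k χ w) : ∃ v, S w v ∧ χ v := by
  induction k generalizing w with
  | zero => exact ⟨w, hrefl w, h⟩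
  | succ k ih =>
    rcases h with ⟨u, hwu, -, v, huv, -, h⟩
    rcases ih h with ⟨v', hvv', hχ⟩
    exact ⟨v', htrans (htrans hwu huv) hvv', hχ⟩

theorem extraction (hrefl : ∀ w : W, S w w)
    (htrans : ∀ {a b c : W}, S a b → S b c → S a c)
    (w0 : W) (g0 : ℕ → M.Dom) (H : truth M (Bstar ts) w0 g0) :
    ∃ f : ℕ → ℕ → Fin (ts.s + 1), ts.T1 f ∧ ts.T2 f := by
  classical
  obtain ⟨h0, h1, h2, h3, h4, h5, h6, h7, h8⟩ := truth_Bstar.1 H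
  rw [truth_A1] at h1
  rw [truth_A2] at h2
  rw [truth_A3] at h3
  rw [truth_A4] at h4
  rw [truth_A6] at h6
  rw [truth_A7] at h7
  rw [truth_A8] at h8
  obtain ⟨c0, hc0D, ⟨tt0, htt0⟩, hq0⟩ := h1
  -- the chain of columns
  let Cstep : {d : M.Dom // d ∈ M.D w0} → {d : M.Dom // d ∈ M.D w0} :=
    fun p => ⟨Classical.choose (h2 p.1 p.2), (Classical.choose_spec (h2 p.1 p.2)).1⟩
  let C : ℕ → {d : M.Dom // d ∈ M.D w0} := fun n => Nat.rec ⟨c0, hc0D⟩ (fun _ p => Cstep p) n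
  have hCsucc : ∀ k, C (k+1) = Cstep (C k) := fun k => rfl
  have hRl : ∀ k, RlS M (C k).1 (C (k+1)).1 w0 := by
    intro k
    rw [hCsucc]
    exact (Classical.choose_spec (h2 (C k).1 (C k).2)).2
  -- the chain of worlds
  let P : ℕ → W → Prop := fun k v => S w0 v ∧ qpS M (C k).1 v
  have hex : ∀ k v, P k v → ∃ v', S v v' ∧ P (k+1) v' := by
    intro k v hv
    have h4' := h4 (C k).1 (C k).2 (C (k+1)).1 (C (k+1)).2 (hRl k) v hv.1
    have hbd : BDS M (ts.s+4) (qpS M (C (k+1)).1) v := (h4'.1 hv.2).2.1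
    rcases BDS_exists hrefl htrans hbd with ⟨v', hvv', hq⟩
    exact ⟨v', hvv', htrans hv.1 hvv', hq⟩
  let σ : ℕ → W → W := fun k v => if h : P k v then Classical.choose (hex k v h) else v
  have hσ : ∀ k v (h : P k v), σ k v = Classical.choose (hex k v h) :=
    fun k v h => dif_pos h
  let V : ℕ → W := fun k => Nat.rec w0 (fun k v => σ k v) k
  have hVsucc : ∀ k, V (k+1) = σ k (V k) := fun k => rfl
  have hVP : ∀ k, P k (V k) ∧ S (V k) (V (k+1)) := by
    intro k
    induction k with
    | zero =>
      have hP0 : P 0 (V 0) := ⟨hrefl w0, hq0⟩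
      refine ⟨hP0, ?_⟩
      rw [hVsucc, hσ 0 (V 0) hP0]
      exact (Classical.choose_spec (hex 0 (V 0) hP0)).1
    | succ k ih =>
      have hPk1 : P (k+1) (V (k+1)) := by
        rw [hVsucc, hσ k (V k) ih.1]
        exact (Classical.choose_spec (hex k (V k) ih.1)).2
      refine ⟨hPk1, ?_⟩
      rw [hVsucc (k+1), hσ (k+1) (V (k+1)) hPk1]
      exact (Classical.choose_spec (hex (k+1) (V (k+1)) hPk1)).1
  have hV0 : ∀ k, S w0 (V k) := fun k => (hVP k).1.1
  have hqV : ∀ k, qpS M (C k).1 (V k) := fun k => (hVP k).1.2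
  have hVstep : ∀ k, S (V k) (V (k+1)) := fun k => (hVP k).2
  have hmemV : ∀ (d : {d : M.Dom // d ∈ M.D w0}) k, d.1 ∈ M.D (V k) :=
    fun d k => M.D_mono (hV0 k) d.2
  -- persistence of the relation
  have hRlv : ∀ k m, RlS M (C k).1 (C (k+1)).1 (V m) := by
    intro k m
    exact h3 (C k).1 (C k).2 (C (k+1)).1 (C (k+1)).2 (hRl k) (V m) (hV0 m)
      ⟨(C m).1, hmemV (C m) m, hqV m⟩
  -- existence of tiles
  have hEx : ∀ a m, ∃ t : Fin (ts.s+1), BtS M t.1 (C a).1 (V m) := by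
    have hbase : ∀ a, ∃ t : Fin (ts.s+1), BtS M t.1 (C a).1 (V 0) := by
      intro a
      induction a with
      | zero => exact ⟨tt0, htt0⟩
      | succ a ih =>
        rcases ih with ⟨t, ht⟩
        rcases h7 (C a).1 (C a).2 (C (a+1)).1 (C (a+1)).2 (V 0) (hV0 0) t
          ⟨hRlv a 0, ht⟩ with ⟨t', -, ht'⟩
        exact ⟨t', ht'⟩
    intro a m
    induction m with
    | zero => exact hbase a
    | succ m ih =>
      rcases ih with ⟨t, ht⟩
      rcases h8 (C m).1 (C m).2 (C a).1 (C a).2 (V m) (hV0 m) t ⟨hqV m, ht⟩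
        (V (m+1)) (hVstep m)
        ⟨(C (m+1)).1, hmemV (C (m+1)) (m+1), hRlv m (m+1), hqV (m+1)⟩ with ⟨t', -, ht'⟩
      exact ⟨t', ht'⟩
  let f : ℕ → ℕ → Fin (ts.s+1) := fun a m => Classical.choose (hEx a m)
  have hf : ∀ a m, BtS M (f a m).1 (C a).1 (V m) := fun a m => Classical.choose_spec (hEx a m)
  have huniq : ∀ a m (t : Fin (ts.s+1)), BtS M t.1 (C a).1 (V m) → t = f a m := by
    intro a m t ht
    by_contra hne
    exact h6 (C a).1 (C a).2 (V m) (hV0 m) (f a m) (hf a m) t hne ht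
  refine ⟨f, ?_, ?_⟩
  · intro a m
    rcases h7 (C a).1 (C a).2 (C (a+1)).1 (C (a+1)).2 (V m) (hV0 m) (f a m)
      ⟨hRlv a m, hf a m⟩ with ⟨t', hmatch, ht'⟩
    rw [huniq (a+1) m t' ht'] at hmatch
    exact hmatch
  · intro a m
    rcases h8 (C m).1 (C m).2 (C a).1 (C a).2 (V m) (hV0 m) (f a m) ⟨hqV m, hf a m⟩
      (V (m+1)) (hVstep m)
      ⟨(C (m+1)).1, hmemV (C (m+1)) (m+1), hRlv m (m+1), hqV (m+1)⟩ with ⟨t', hmatch, ht'⟩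
    rw [huniq a (m+1) t' ht'] at hmatch
    exact hmatch

end Extraction
section Model

variable (ts : TileSet) (f : ℕ → ℕ → Fin (ts.s + 1))

/-- Residue-level description of the event structure: element `d` has a `P`-event in
block `m*L + r` (`L = s+4`). Element `0` is the blank `b`; element `a+1` is column `cₐ`. -/
def evC (d m r : ℕ) : Prop :=
  match d with
  | 0 => (r = 1 ∨ r = 2) ∧ Odd m
  | a+1 =>
      (r = 0 ∧ m = a) ∨
      (r = 2 ∧ ∃ i, m = 2^(a+1)*(2*i+1)) ∨
      (r = 1 ∧ ∃ i b, a = b+1 ∧ m = 2^a*(2*i+1)) ∨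
      (r = ts.s + 3 - (f a m : ℕ))

/-- Element `d` has a `P`-event in block `B`. -/
def ev (d B : ℕ) : Prop := ∃ m r, B = m*(ts.s+4) + r ∧ r < ts.s+4 ∧ evC ts f d m r

theorem addMul_inj {L m r m' r' : ℕ} (hL : 0 < L) (h : m*L + r = m'*L + r')
    (hr : r < L) (hr' : r' < L) : m = m' ∧ r = r' := by
  have h1 : (L*m + r) % L = r % L := Nat.mul_add_mod L m r
  have h2 : (L*m' + r') % L = r' % L := Nat.mul_add_mod L m' r'
  have e1 : m*L + r = L*m + r := by ring_nf
  have e2 : m'*L + r' = L*m' + r' := by ring_nf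
  have hrr : r = r' := by
    rw [e1, e2] at h
    rw [Nat.mod_eq_of_lt hr] at h1
    rw [Nat.mod_eq_of_lt hr'] at h2
    rw [← h1, ← h2, h]
  subst hrr
  refine ⟨Nat.eq_of_mul_eq_mul_right hL ?_, rfl⟩
  omega

theorem pow2_inj {p q i j : ℕ} (h : 2^p*(2*i+1) = 2^q*(2*j+1)) : p = q := by
  induction p generalizing q j i with
  | zero =>
    cases q with
    | zero => rfl
    | succ q =>
      exfalso
      rw [pow_succ] at h
      have : 2^0*(2*i+1) = 2*(2^q*(2*j+1)) := by rw [h]; ring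
      omega
  | succ p ih =>
    cases q with
    | zero =>
      exfalso
      rw [pow_succ] at h
      have : 2^0*(2*j+1) = 2*(2^p*(2*i+1)) := by rw [← h]; ring
      omega
    | succ q =>
      rw [pow_succ, pow_succ] at h
      have h' : 2*(2^p*(2*i+1)) = 2*(2^q*(2*j+1)) := by rw [← mul_assoc, ← mul_assoc]; ring_nf; ring_nf at h; omega
      have := Nat.eq_of_mul_eq_mul_left (by omega) h'
      rw [ih this]

variable (α : Ordinal) (hα : Ordinal.omega0 ≤ α)

/-- The finite world `n`. -/
def wn (n : ℕ) : {β : Ordinal // β < α} :=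
  ⟨(n : Ordinal), lt_of_lt_of_le (Ordinal.nat_lt_omega0 n) hα⟩

/-- The `≤`-relation on the worlds. -/
def Sle : {β : Ordinal // β < α} → {β : Ordinal // β < α} → Prop := fun a b => a.1 ≤ b.1

theorem Sle_refl : ∀ w, Sle α w w := fun _ => le_refl _

theorem Sle_trans : ∀ {a b c}, Sle α a b → Sle α b c → Sle α a c :=
  fun h1 h2 => le_trans h1 h2

theorem wn_le {m n : ℕ} : Sle α (wn α hα m) (wn α hα n) ↔ m ≤ n := Nat.cast_le

theorem wn_inj {m n : ℕ} (h : wn α hα m = wn α hα n) : m = n := by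
  have := congrArg Subtype.val h
  exact Nat.cast_inj.1 this

theorem world_cases (w : {β : Ordinal // β < α}) :
    (∃ u : ℕ, w = wn α hα u) ∨ (∀ u : ℕ, Sle α (wn α hα u) w ∧ w ≠ wn α hα u) := by
  rcases lt_or_ge w.1 Ordinal.omega0 with h | h
  · rcases Ordinal.lt_omega0.1 h with ⟨n, hn⟩
    exact Or.inl ⟨n, Subtype.ext hn⟩
  · right
    intro u
    constructor
    · exact le_trans (le_of_lt (Ordinal.nat_lt_omega0 u)) h
    · intro he
      rw [he] at h
      exact absurd (lt_of_le_of_lt h (Ordinal.nat_lt_omega0 u)) (lt_irrefl _)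

/-- Interpretation of `P` in the model. -/
def PmI (w : {β : Ordinal // β < α}) (d : ℕ) : Prop :=
  ∃ u : ℕ, w.1 = (u : Ordinal) ∧ (u % 2 = 0 ∨ ev ts f d (u/2))

/-- Interpretation of `q` in the model. -/
def qI (w : {β : Ordinal // β < α}) : Prop :=
  ∃ k : ℕ, w.1 = ((2*(k*(ts.s+4))+1 : ℕ) : Ordinal)

/-- The countermodel. -/
@[reducible] def NMod : KModel {β : Ordinal // β < α} (Sle α) (Letter ts.s) where
  Dom := ℕ
  D := fun _ => Set.univ
  D_ne := fun _ => ⟨0, trivial⟩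
  D_mono := fun _ _ _ => subset_rfl
  I := fun w n P as =>
    match P with
    | Letter.Pm => PmI ts f α w (as 0)
    | Letter.q => qI ts α w
    | _ => False
  I_dom := fun _ _ _ _ _ _ => trivial

theorem PmI_wn {u : ℕ} {d : ℕ} :
    PmI ts f α (wn α hα u) d ↔ (u % 2 = 0 ∨ ev ts f d (u/2)) := by
  constructor
  · rintro ⟨u', hu', h⟩
    rwa [show u' = u from Nat.cast_inj.1 hu'.symm] at h
  · intro h
    exact ⟨u, rfl, h⟩

theorem qI_wn {u : ℕ} : qI ts α (wn α hα u) ↔ ∃ k, u = 2*(k*(ts.s+4))+1 := by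
  constructor
  · rintro ⟨k, hk⟩
    exact ⟨k, Nat.cast_inj.1 hk⟩
  · rintro ⟨k, hk⟩
    exact ⟨k, by rw [hk]; rfl⟩

theorem PmI_dead {w} (hw : ∀ u : ℕ, w ≠ wn α hα u) {d : ℕ} : ¬ PmI ts f α w d := by
  rintro ⟨u, hu, -⟩
  exact hw u (Subtype.ext hu)

theorem qI_dead {w} (hw : ∀ u : ℕ, w ≠ wn α hα u) : ¬ qI ts α w := by
  rintro ⟨k, hk⟩
  exact hw _ (Subtype.ext hk)

end Model
section ModelChar

variable {ts : TileSet} {f : ℕ → ℕ → Fin (ts.s + 1)} {α : Ordinal} (hα : Ordinal.omega0 ≤ α)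

theorem N_pP {w} {d : ℕ} : pPS (NMod ts f α) d w ↔ PmI ts f α w d := Iff.rfl

theorem N_qp {w} {d : ℕ} : qpS (NMod ts f α) d w ↔ (qI ts α w ∧ PmI ts f α w d) := Iff.rfl

theorem N_mk {w} : mkS (NMod ts f α) w ↔ ∀ d : ℕ, PmI ts f α w d :=
  ⟨fun h d => h d trivial, fun h d _ => h d⟩

theorem ev_iff' {d m r : ℕ} (hr : r < ts.s + 4) :
    ev ts f d (m*(ts.s+4)+r) ↔ evC ts f d m r := by
  constructor
  · rintro ⟨m', r', hB, hr', hc⟩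
    obtain ⟨rfl, rfl⟩ := addMul_inj (by omega) hB hr hr'
    exact hc
  · intro hc
    exact ⟨m, r, rfl, hr, hc⟩

theorem ev_res0 {d k : ℕ} : ev ts f d (k*(ts.s+4)) ↔ d = k+1 := by
  have h0 : ev ts f d (k*(ts.s+4)) ↔ evC ts f d k 0 := by
    have := ev_iff' (d := d) (f := f) (m := k) (r := 0) (by omega)
    simpa using this
  rw [h0]
  match d with
  | 0 =>
    simp only [evC]
    constructor
    · rintro ⟨h, -⟩; omega
    · omega
  | a+1 =>
    simp only [evC]
    constructor
    · rintro (⟨-, rfl⟩ | ⟨h, -⟩ | ⟨h, -⟩ | h)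
      · rfl
      · omega
      · omega
      · have := (f a k).isLt; omega
    · rintro h
      refine Or.inl ⟨?_, ?_⟩ <;> first | trivial | omega

theorem nonmk {B : ℕ} : ¬ ev ts f 0 B ∨ ¬ ev ts f 1 B := by
  by_contra h
  push_neg at h
  obtain ⟨⟨m, r, hB, hr, hc0⟩, ⟨m', r', hB', hr', hc1⟩⟩ := h
  obtain ⟨rfl, rfl⟩ := addMul_inj (L := ts.s+4) (by omega) (by omega : m*(ts.s+4)+r = m'*(ts.s+4)+r') hr hr'
  simp only [evC] at hc0 hc1
  obtain ⟨hr12, hodd⟩ := hc0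
  rcases hc1 with ⟨h0, -⟩ | ⟨-, i, hi⟩ | ⟨-, i, b, hb, -⟩ | ht
  · omega
  · rw [pow_succ, pow_zero, one_mul] at hi
    rcases hodd with ⟨j, hj⟩
    omega
  · omega
  · have := (f 0 m).isLt; omega

theorem mkN_iff {w} : mkS (NMod ts f α) w ↔ ∃ u, w = wn α hα u ∧ u % 2 = 0 := by
  rw [N_mk]
  constructor
  · intro h
    rcases world_cases α hα w with ⟨u, rfl⟩ | hdead
    · refine ⟨u, rfl, ?_⟩
      by_contra hu
      have h0 := (PmI_wn ts f α hα).1 (h 0)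
      have h1 := (PmI_wn ts f α hα).1 (h 1)
      have e0 : ev ts f 0 (u/2) := by tauto
      have e1 : ev ts f 1 (u/2) := by tauto
      rcases nonmk (B := u/2) with hc | hc
      · exact hc e0
      · exact hc e1
    · exact absurd (h 0) (PmI_dead ts f α hα (fun u hu => (hdead u).2 hu))
  · rintro ⟨u, rfl, hu⟩ d
    exact (PmI_wn ts f α hα).2 (Or.inl hu)

theorem qpN_iff {d : ℕ} {w} :
    qpS (NMod ts f α) d w ↔ ∃ k, w = wn α hα (2*(k*(ts.s+4))+1) ∧ d = k+1 := by
  rw [N_qp]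
  constructor
  · rintro ⟨hq, hp⟩
    rcases world_cases α hα w with ⟨u, rfl⟩ | hdead
    · rcases (qI_wn ts α hα).1 hq with ⟨k, rfl⟩
      refine ⟨k, rfl, ?_⟩
      have hp' := (PmI_wn ts f α hα).1 hp
      have : ev ts f d ((2*(k*(ts.s+4))+1)/2) := by
        rcases hp' with h | h
        · omega
        · exact h
      rw [show (2*(k*(ts.s+4))+1)/2 = k*(ts.s+4) by omega] at this
      exact ev_res0.1 this
    · exact absurd hq (qI_dead ts α hα (fun u hu => (hdead u).2 hu))
  · rintro ⟨k, rfl, rfl⟩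
    refine ⟨(qI_wn ts α hα).2 ⟨k, rfl⟩, (PmI_wn ts f α hα).2 (Or.inr ?_)⟩
    rw [show (2*(k*(ts.s+4))+1)/2 = k*(ts.s+4) by omega]
    exact ev_res0.2 rfl

theorem qp_dead {d : ℕ} {w} (hw : ∀ u : ℕ, w ≠ wn α hα u) : ¬ qpS (NMod ts f α) d w := by
  intro h
  rcases (qpN_iff hα).1 h with ⟨k, hk, -⟩
  exact hw _ hk

theorem BDS_N_dead {k : ℕ} {χ} {w} (hw : ∀ u : ℕ, w ≠ wn α hα u) :
    ¬ BDS (NMod ts f α) (k+1) χ w := by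
  rintro ⟨u', hle, hmk, -⟩
  rcases (mkN_iff hα).1 hmk with ⟨x, rfl, -⟩
  have : w.1 < Ordinal.omega0 := lt_of_le_of_lt hle (Ordinal.nat_lt_omega0 x)
  rcases Ordinal.lt_omega0.1 this with ⟨n, hn⟩
  exact hw n (Subtype.ext hn)

theorem BDS_N_iff {k : ℕ} {χ} {u : ℕ}
    (hd : ∀ w, (∀ u : ℕ, w ≠ wn α hα u) → ¬ χ w) :
    BDS (NMod ts f α) (k+1) χ (wn α hα u) ↔
      ∃ B, (u+1)/2 + k ≤ B ∧ χ (wn α hα (2*B+1)) := by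
  induction k generalizing u with
  | zero =>
    constructor
    · rintro ⟨u', h1, hmk, v, h2, hnmk, hχ⟩
      rcases (mkN_iff hα).1 hmk with ⟨x, rfl, hx⟩
      rcases world_cases α hα v with ⟨y, rfl⟩ | hdead
      · have hy : y % 2 = 1 := by
          by_contra hy
          exact hnmk ((mkN_iff hα).2 ⟨y, rfl, by omega⟩)
        have hux : u ≤ x := (wn_le α hα).1 h1
        have hxy : x ≤ y := (wn_le α hα).1 h2
        refine ⟨y/2, by omega, ?_⟩
        rwa [show 2*(y/2)+1 = y by omega]
      · exact absurd hχ (hd _ (fun u hu => (hdead u).2 hu))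
    · rintro ⟨B, hB, hχ⟩
      refine ⟨wn α hα (2*((u+1)/2)), (wn_le α hα).2 (by omega),
        (mkN_iff hα).2 ⟨_, rfl, by omega⟩,
        wn α hα (2*B+1), (wn_le α hα).2 (by omega), ?_, hχ⟩
      intro hmk
      rcases (mkN_iff hα).1 hmk with ⟨x, hx, hxe⟩
      have := wn_inj α hα hx
      omega
  | succ k ih =>
    constructor
    · rintro ⟨u', h1, hmk, v, h2, hnmk, hrest⟩
      rcases (mkN_iff hα).1 hmk with ⟨x, rfl, hx⟩
      rcases world_cases α hα v with ⟨y, rfl⟩ | hdead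
      · have hy : y % 2 = 1 := by
          by_contra hy
          exact hnmk ((mkN_iff hα).2 ⟨y, rfl, by omega⟩)
        have hux : u ≤ x := (wn_le α hα).1 h1
        have hxy : x ≤ y := (wn_le α hα).1 h2
        rcases ih.1 hrest with ⟨B, hB, hχ⟩
        exact ⟨B, by omega, hχ⟩
      · exact absurd hrest (BDS_N_dead hα (fun u hu => (hdead u).2 hu))
    · rintro ⟨B, hB, hχ⟩
      refine ⟨wn α hα (2*((u+1)/2)), (wn_le α hα).2 (by omega),
        (mkN_iff hα).2 ⟨_, rfl, by omega⟩,
        wn α hα (2*((u+1)/2)+1), (wn_le α hα).2 (by omega), ?_, ?_⟩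
      · intro hmk
        rcases (mkN_iff hα).1 hmk with ⟨x, hx, hxe⟩
        have := wn_inj α hα hx
        omega
      · exact ih.2 ⟨B, by omega, hχ⟩

theorem BDSqp_iff {e k u : ℕ} :
    BDS (NMod ts f α) (k+1) (qpS (NMod ts f α) e) (wn α hα u) ↔
      ∃ j, e = j+1 ∧ (u+1)/2 + k ≤ j*(ts.s+4) := by
  rw [BDS_N_iff hα (fun w hw => qp_dead hα hw)]
  constructor
  · rintro ⟨B, hB, hqp⟩
    rcases (qpN_iff hα).1 hqp with ⟨j, hj, rfl⟩
    have := wn_inj α hα hj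
    exact ⟨j, rfl, by omega⟩
  · rintro ⟨j, rfl, hj⟩
    exact ⟨j*(ts.s+4), by omega, (qpN_iff hα).2 ⟨j, rfl, rfl⟩⟩

end ModelChar
section ModelChar2

variable {ts : TileSet} {f : ℕ → ℕ → Fin (ts.s + 1)} {α : Ordinal} (hα : Ordinal.omega0 ≤ α)

theorem BtN_dead {n : ℕ} {d : ℕ} {w} (hw : ∀ u : ℕ, w ≠ wn α hα u) :
    ¬ BtS (NMod ts f α) n d w := by
  rintro ⟨e, -, hbd, -⟩
  exact BDS_N_dead hα (k := ts.s+3) hw hbd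

theorem BtN_wn {n : ℕ} {d u : ℕ} :
    BtS (NMod ts f α) n d (wn α hα u) ↔
      ∃ j B, j*(ts.s+4) = (u+1)/2 + ts.s+3 ∧ B + n + 1 = j*(ts.s+4) ∧
        (u+1)/2 ≤ B ∧ ev ts f d B := by
  constructor
  · rintro ⟨e, -, hbd4, hbd5, hin⟩
    rcases (BDSqp_iff hα (k := ts.s+3)).1 hbd4 with ⟨j, rfl, hj4⟩
    have hj5 : ¬ ((u+1)/2 + (ts.s+4) ≤ j*(ts.s+4)) := fun hc =>
      hbd5 ((BDSqp_iff hα (k := ts.s+4)).2 ⟨j, rfl, hc⟩)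
    have hjeq : j*(ts.s+4) = (u+1)/2 + ts.s+3 := by
      generalize j*(ts.s+4) = X at hj4 hj5 ⊢
      omega
    have hin' := (BDS_N_iff hα (k := 0)
      (fun w hw hc => BDS_N_dead hα (k := n) hw hc.1) ).1 hin
    rcases hin' with ⟨B, hB, hbn1, hbn2, hpd⟩
    rcases (BDSqp_iff hα (k := n)).1 hbn1 with ⟨j', hj', hB1⟩
    obtain rfl : j = j' := by omega
    have hB2 : ¬ (((2*B+1)+1)/2 + (n+1) ≤ j*(ts.s+4)) := fun hc =>
      hbn2 ((BDSqp_iff hα (k := n+1)).2 ⟨j, rfl, hc⟩)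
    have hBeq : B + n + 1 = j*(ts.s+4) := by
      generalize j*(ts.s+4) = X at hB1 hB2 ⊢
      omega
    have hev : ev ts f d B := by
      rcases (PmI_wn ts f α hα).1 hpd with h | h
      · omega
      · rwa [show (2*B+1)/2 = B by omega] at h
    exact ⟨j, B, hjeq, hBeq, by omega, hev⟩
  · rintro ⟨j, B, h1, h2, h3, hev⟩
    refine ⟨j+1, trivial, ?_, ?_, ?_⟩
    · exact (BDSqp_iff hα (k := ts.s+3)).2 ⟨j, rfl, by
        generalize j*(ts.s+4) = X at h1 ⊢
        omega⟩
    · intro hc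
      rcases (BDSqp_iff hα (k := ts.s+4)).1 hc with ⟨j', hj', hc'⟩
      obtain rfl : j = j' := by omega
      generalize j*(ts.s+4) = X at h1 hc'
      omega
    · refine (BDS_N_iff hα (k := 0)
        (fun w hw hc => BDS_N_dead hα (k := n) hw hc.1)).2 ⟨B, by omega, ?_, ?_, ?_⟩
      · exact (BDSqp_iff hα (k := n)).2 ⟨j, rfl, by
          generalize j*(ts.s+4) = X at h1 h2 ⊢
          omega⟩
      · intro hc
        rcases (BDSqp_iff hα (k := n+1)).1 hc with ⟨j', hj', hc'⟩
        obtain rfl : j = j' := by omega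
        generalize j*(ts.s+4) = X at h1 h2 hc'
        omega
      · rw [N_pP, PmI_wn ts f α hα]
        refine Or.inr ?_
        rwa [show (2*B+1)/2 = B by omega]

theorem BtN_tile {t : Fin (ts.s+1)} {d u : ℕ} :
    BtS (NMod ts f α) t.1 d (wn α hα u) ↔
      ∃ m a, (u+1)/2 = m*(ts.s+4) + 1 ∧ d = a+1 ∧ f a m = t := by
  have htlt : t.1 < ts.s + 1 := t.isLt
  rw [BtN_wn hα]
  constructor
  · rintro ⟨j, B, h1, h2, h3, hev⟩
    match j, h1, h2 with
    | 0, h1, h2 =>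
      rw [zero_mul] at h1
      omega
    | (m+1), h1, h2 =>
      rw [Nat.succ_mul] at h1 h2
      have hr : (u+1)/2 = m*(ts.s+4) + 1 := by
        generalize m*(ts.s+4) = X at h1 h2 ⊢
        omega
      have hBeq : B = m*(ts.s+4) + (ts.s+3 - t.1) := by
        generalize m*(ts.s+4) = X at h1 h2 ⊢
        omega
      rw [hBeq] at hev
      have hevc := (ev_iff' (by omega)).1 hev
      match d, hevc with
      | 0, hevc =>
        obtain ⟨hr12, -⟩ := hevc
        omega
      | (a+1), hevc =>
        refine ⟨m, a, hr, rfl, ?_⟩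
        rcases hevc with ⟨hc, -⟩ | ⟨hc, -⟩ | ⟨hc, -⟩ | hc
        · omega
        · omega
        · omega
        · have hflt : (f a m).1 < ts.s + 1 := (f a m).isLt
          exact Fin.ext (by omega)
  · rintro ⟨m, a, hr, rfl, hf⟩
    refine ⟨m+1, m*(ts.s+4) + (ts.s+3 - t.1), ?_, ?_, ?_, ?_⟩
    · rw [Nat.succ_mul]
      generalize m*(ts.s+4) = X at hr ⊢
      omega
    · rw [Nat.succ_mul]
      generalize m*(ts.s+4) = X
      omega
    · generalize m*(ts.s+4) = X at hr ⊢
      omega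
    · refine (ev_iff' (by omega)).2 ?_
      show _ ∨ _ ∨ _ ∨ _
      refine Or.inr (Or.inr (Or.inr ?_))
      rw [hf]

theorem evC_two {x m : ℕ} :
    evC ts f x m 2 ↔ ((x = 0 ∧ Odd m) ∨ ∃ a i, x = a+1 ∧ m = 2^(a+1)*(2*i+1)) := by
  match x with
  | 0 =>
    show ((2 = 1 ∨ 2 = 2) ∧ Odd m) ↔ _
    constructor
    · rintro ⟨-, h⟩; exact Or.inl ⟨rfl, h⟩
    · rintro (⟨-, h⟩ | ⟨a, i, h, -⟩)
      · exact ⟨Or.inr rfl, h⟩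
      · omega
  | a+1 =>
    show (_ ∨ _ ∨ _ ∨ _) ↔ _
    constructor
    · rintro (⟨hc, -⟩ | ⟨-, i, hi⟩ | ⟨hc, -⟩ | hc)
      · omega
      · exact Or.inr ⟨a, i, rfl, hi⟩
      · omega
      · have := (f a m).isLt; omega
    · rintro (⟨hc, -⟩ | ⟨a', i, ha', hi⟩)
      · omega
      · have haa : a' = a := by omega
        subst haa
        exact Or.inr (Or.inl ⟨rfl, i, hi⟩)

theorem evC_one {y m : ℕ} :
    evC ts f y m 1 ↔ ((y = 0 ∧ Odd m) ∨ ∃ b i, y = b+2 ∧ m = 2^(b+1)*(2*i+1)) := by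
  match y with
  | 0 =>
    show ((1 = 1 ∨ 1 = 2) ∧ Odd m) ↔ _
    constructor
    · rintro ⟨-, h⟩; exact Or.inl ⟨rfl, h⟩
    · rintro (⟨-, h⟩ | ⟨a, i, h, -⟩)
      · exact ⟨Or.inl rfl, h⟩
      · omega
  | a+1 =>
    show (_ ∨ _ ∨ _ ∨ _) ↔ _
    constructor
    · rintro (⟨hc, -⟩ | ⟨hc, -⟩ | ⟨-, i, b, hb, hm⟩ | hc)
      · omega
      · omega
      · subst hb
        exact Or.inr ⟨b, i, rfl, hm⟩
      · have := (f a m).isLt; omega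
    · rintro (⟨hc, -⟩ | ⟨b, i, hb, hm⟩)
      · omega
      · have haa : a = b+1 := by omega
        subst haa
        exact Or.inr (Or.inr (Or.inl ⟨rfl, i, b, rfl, hm⟩))

end ModelChar2
section ModelChar3

variable {ts : TileSet} {f : ℕ → ℕ → Fin (ts.s + 1)} {α : Ordinal} (hα : Ordinal.omega0 ≤ α)

theorem RlN_dead {x y : ℕ} {w} (hw : ∀ u : ℕ, w ≠ wn α hα u) :
    ¬ RlS (NMod ts f α) x y w :=
  fun h => BDS_N_dead hα (k := 0) hw h

theorem RlN_wn {x y u : ℕ} :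
    RlS (NMod ts f α) x y (wn α hα u) ↔
      ((x = 0 ∧ y = 0) ∨ ∃ a, x = a+1 ∧ y = a+2) := by
  have hd : ∀ w, (∀ u : ℕ, w ≠ wn α hα u) →
      ¬ (BtS (NMod ts f α) (ts.s+1) x w ∧ BtS (NMod ts f α) (ts.s+2) y w) :=
    fun w hw hc => BtN_dead hα hw hc.1
  have hiff := BDS_N_iff (ts := ts) (f := f) (χ := fun v => BtS (NMod ts f α) (ts.s+1) x v ∧
    BtS (NMod ts f α) (ts.s+2) y v) hα (k := 0) (u := u) hd
  constructor
  · intro h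
    rcases hiff.1 h with ⟨B, hB, h1, h2⟩
    rcases (BtN_wn hα).1 h1 with ⟨j1, B1, e11, e12, -, hev1⟩
    rcases (BtN_wn hα).1 h2 with ⟨j2, B2, e21, e22, -, hev2⟩
    match j1, j2, e11, e12, e21, e22 with
    | 0, _, e11, _, _, _ => rw [zero_mul] at e11; omega
    | _+1, 0, _, _, e21, _ => rw [zero_mul] at e21; omega
    | m+1, m2+1, e11, e12, e21, e22 =>
      rw [Nat.succ_mul] at e11 e12 e21 e22
      have hmm : m*(ts.s+4) = m2*(ts.s+4) := by
        generalize m*(ts.s+4) = X1 at e11 ⊢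
        generalize m2*(ts.s+4) = X2 at e21 ⊢
        omega
      obtain rfl : m = m2 := Nat.eq_of_mul_eq_mul_right (by omega) hmm
      have hB1 : B1 = m*(ts.s+4) + 2 := by
        generalize m*(ts.s+4) = X at e11 e12 ⊢
        omega
      have hB2 : B2 = m*(ts.s+4) + 1 := by
        generalize m*(ts.s+4) = X at e21 e22 ⊢
        omega
      rw [hB1] at hev1
      rw [hB2] at hev2
      have hc2 := evC_two.1 ((ev_iff' (by omega)).1 hev1)
      have hc1 := evC_one.1 ((ev_iff' (by omega)).1 hev2)
      rcases hc2 with ⟨rfl, hodd⟩ | ⟨a, i, rfl, hmi⟩ <;>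
        rcases hc1 with ⟨rfl, hodd2⟩ | ⟨b, i2, rfl, hmi2⟩
      · exact Or.inl ⟨rfl, rfl⟩
      · exfalso
        have hme : m = 2*(2^b*(2*i2+1)) := by rw [hmi2, pow_succ]; ring
        rcases hodd with ⟨c, hc⟩
        omega
      · exfalso
        have hme : m = 2*(2^a*(2*i+1)) := by rw [hmi, pow_succ]; ring
        rcases hodd2 with ⟨c, hc⟩
        omega
      · have hab : a+1 = b+1 := pow2_inj (hmi.symm.trans hmi2)
        exact Or.inr ⟨a, rfl, by omega⟩
  · intro h
    have le_mul : ∀ z : ℕ, z ≤ z*(ts.s+4) := fun z => by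
      calc z = z*1 := (mul_one z).symm
      _ ≤ z*(ts.s+4) := Nat.mul_le_mul_left z (by omega)
    have helper : ∀ (n d z r : ℕ), 1 ≤ r → r + n = ts.s + 3 →
        ev ts f d (z*(ts.s+4)+r) →
        BtS (NMod ts f α) n d (wn α hα (2*(z*(ts.s+4))+1)) := by
      intro n d z r hr1 hrn hev
      refine (BtN_wn hα).2 ⟨z+1, z*(ts.s+4)+r, ?_, ?_, ?_, hev⟩ <;>
      · have hsm : (z+1)*(ts.s+4) = z*(ts.s+4) + (ts.s+4) := Nat.succ_mul _ _
        generalize hY : (z+1)*(ts.s+4) = Y at hsm ⊢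
        generalize hX : z*(ts.s+4) = X at hsm ⊢
        omega
    apply hiff.2
    rcases h with ⟨rfl, rfl⟩ | ⟨a, rfl, rfl⟩
    · refine ⟨(2*((u+1)/2)+1)*(ts.s+4), ?_, ?_, ?_⟩
      · have h1 : (u+1)/2 + 0 ≤ (2*((u+1)/2)+1) := by omega
        exact le_trans h1 (le_mul _)
      · refine helper _ _ _ 2 (by omega) (by omega) ?_
        exact (ev_iff' (by omega)).2 ⟨Or.inr rfl, ⟨(u+1)/2, by omega⟩⟩
      · refine helper _ _ _ 1 (by omega) (by omega) ?_
        exact (ev_iff' (by omega)).2 ⟨Or.inl rfl, ⟨(u+1)/2, by omega⟩⟩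
    · have h2p : 1 ≤ 2^(a+1) := Nat.one_le_two_pow
      have hz : (2*((u+1)/2)+1) ≤ 2^(a+1)*(2*((u+1)/2)+1) := by
        calc (2*((u+1)/2)+1) = 1*(2*((u+1)/2)+1) := (one_mul _).symm
        _ ≤ 2^(a+1)*(2*((u+1)/2)+1) := Nat.mul_le_mul_right _ h2p
      refine ⟨(2^(a+1)*(2*((u+1)/2)+1))*(ts.s+4), ?_, ?_, ?_⟩
      · have h1 : (u+1)/2 + 0 ≤ 2^(a+1)*(2*((u+1)/2)+1) := by omega
        exact le_trans h1 (le_mul _)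
      · refine helper _ _ _ 2 (by omega) (by omega) ?_
        exact (ev_iff' (by omega)).2 (Or.inr (Or.inl ⟨rfl, ⟨(u+1)/2, rfl⟩⟩))
      · refine helper _ _ _ 1 (by omega) (by omega) ?_
        exact (ev_iff' (by omega)).2 (Or.inr (Or.inr (Or.inl ⟨rfl, ⟨(u+1)/2, a, rfl, rfl⟩⟩)))
end ModelChar3
section Verify

variable {ts : TileSet} {f : ℕ → ℕ → Fin (ts.s + 1)} {α : Ordinal} (hα : Ordinal.omega0 ≤ α)

theorem NMod_A0 : ∃ d ∈ (NMod ts f α).D (wn α hα 1),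
    ∀ v, Sle α (wn α hα 1) v → ∀ t : Fin (ts.s+1), ¬ BtS (NMod ts f α) t.1 d v := by
  refine ⟨0, trivial, fun v hv t ht => ?_⟩
  rcases world_cases α hα v with ⟨u, rfl⟩ | hdead
  · rcases (BtN_tile hα).1 ht with ⟨m, a, -, hda, -⟩
    omega
  · exact BtN_dead hα (fun u hu => (hdead u).2 hu) ht

theorem NMod_A1 : ∃ d ∈ (NMod ts f α).D (wn α hα 1),
    (∃ t : Fin (ts.s+1), BtS (NMod ts f α) t.1 d (wn α hα 1)) ∧
      qpS (NMod ts f α) d (wn α hα 1) := by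
  refine ⟨1, trivial, ⟨f 0 0, ?_⟩, ?_⟩
  · refine (BtN_tile hα).2 ⟨0, 0, ?_, rfl, rfl⟩
    rw [zero_mul]
  · refine (qpN_iff hα).2 ⟨0, ?_, rfl⟩
    have h1 : 2*((0:ℕ)*(ts.s+4))+1 = 1 := by simp
    rw [h1]

theorem NMod_A2 : ∀ d ∈ (NMod ts f α).D (wn α hα 1),
    ∃ e ∈ (NMod ts f α).D (wn α hα 1), RlS (NMod ts f α) d e (wn α hα 1) := by
  intro d _
  by_cases h : (d : ℕ) = 0
  · exact ⟨(0:ℕ), trivial, (RlN_wn hα).2 (Or.inl ⟨h, rfl⟩)⟩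
  · obtain ⟨a, ha⟩ := Nat.exists_eq_succ_of_ne_zero h
    exact ⟨(a+2 : ℕ), trivial, (RlN_wn hα).2 (Or.inr ⟨a, ha, rfl⟩)⟩

theorem NMod_A3 : ∀ d ∈ (NMod ts f α).D (wn α hα 1), ∀ e ∈ (NMod ts f α).D (wn α hα 1),
    RlS (NMod ts f α) d e (wn α hα 1) → ∀ v, Sle α (wn α hα 1) v →
      (∃ z ∈ (NMod ts f α).D v, qpS (NMod ts f α) z v) → RlS (NMod ts f α) d e v := by
  rintro d - e - hrel v hv ⟨z, -, hqpz⟩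
  rcases (qpN_iff hα).1 hqpz with ⟨k, rfl, -⟩
  exact (RlN_wn hα).2 ((RlN_wn hα).1 hrel)

theorem NMod_A4 : ∀ d ∈ (NMod ts f α).D (wn α hα 1), ∀ e ∈ (NMod ts f α).D (wn α hα 1),
    RlS (NMod ts f α) d e (wn α hα 1) → ∀ v, Sle α (wn α hα 1) v →
      (qpS (NMod ts f α) d v ↔ ¬ mkS (NMod ts f α) v ∧
        BDS (NMod ts f α) (ts.s+4) (qpS (NMod ts f α) e) v ∧
        ¬ BDS (NMod ts f α) (ts.s+5) (qpS (NMod ts f α) e) v) := by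
  rintro d - e - hrel v -
  rcases world_cases α hα v with ⟨u, rfl⟩ | hdead
  · rcases (RlN_wn hα).1 hrel with ⟨hd0, he0⟩ | ⟨a, hda, hea⟩
    · rw [hd0, he0]
      constructor
      · intro hqp
        exfalso
        rcases (qpN_iff hα).1 hqp with ⟨k, -, hk⟩
        omega
      · rintro ⟨-, hbd, -⟩
        exfalso
        rcases (BDSqp_iff hα (k := ts.s+3)).1 hbd with ⟨j, hj, -⟩
        omega
    · rw [hda, hea]
      constructor
      · intro hqp
        rcases (qpN_iff hα).1 hqp with ⟨k, hvu, hk⟩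
        obtain rfl : a = k := by omega
        have hu : u = 2*(a*(ts.s+4))+1 := wn_inj α hα hvu
        refine ⟨?_, ?_, ?_⟩
        · intro hmk
          rcases (mkN_iff hα).1 hmk with ⟨x, hx, hxe⟩
          have := wn_inj α hα hx
          omega
        · refine (BDSqp_iff hα (k := ts.s+3)).2 ⟨a+1, rfl, ?_⟩
          have hsm : (a+1)*(ts.s+4) = a*(ts.s+4)+(ts.s+4) := Nat.succ_mul _ _
          generalize hY : (a+1)*(ts.s+4) = Y at hsm ⊢
          generalize hX : a*(ts.s+4) = X at hsm hu ⊢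
          omega
        · intro hbd
          rcases (BDSqp_iff hα (k := ts.s+4)).1 hbd with ⟨j, hj, hge⟩
          obtain rfl : j = a+1 := by omega
          have hsm : (a+1)*(ts.s+4) = a*(ts.s+4)+(ts.s+4) := Nat.succ_mul _ _
          generalize hY : (a+1)*(ts.s+4) = Y at hsm hge
          generalize hX : a*(ts.s+4) = X at hsm hu hge
          omega
      · rintro ⟨hnmk, hbd4, hbd5⟩
        rcases (BDSqp_iff hα (k := ts.s+3)).1 hbd4 with ⟨j, hj, hge⟩
        obtain rfl : j = a+1 := by omega
        have hodd : u % 2 = 1 := by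
          by_contra h
          exact hnmk ((mkN_iff hα).2 ⟨u, rfl, by omega⟩)
        have hle : ¬ ((u+1)/2 + (ts.s+4) ≤ (a+1)*(ts.s+4)) := fun hc =>
          hbd5 ((BDSqp_iff hα (k := ts.s+4)).2 ⟨a+1, rfl, hc⟩)
        refine (qpN_iff hα).2 ⟨a, ?_, rfl⟩
        have hsm : (a+1)*(ts.s+4) = a*(ts.s+4)+(ts.s+4) := Nat.succ_mul _ _
        have hu : u = 2*(a*(ts.s+4))+1 := by
          generalize hY : (a+1)*(ts.s+4) = Y at hsm hge hle
          generalize hX : a*(ts.s+4) = X at hsm ⊢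
          omega
        rw [hu]
  · constructor
    · intro hqp
      exfalso
      exact qp_dead hα (fun u hu => (hdead u).2 hu) hqp
    · rintro ⟨-, hbd, -⟩
      exfalso
      exact BDS_N_dead hα (k := ts.s+3) (fun u hu => (hdead u).2 hu) hbd

theorem NMod_A5 : ∀ d ∈ (NMod ts f α).D (wn α hα 1), ∀ e ∈ (NMod ts f α).D (wn α hα 1),
    ∀ v, Sle α (wn α hα 1) v → ∀ t : Fin (ts.s+1),
      qpS (NMod ts f α) d v ∧ BtS (NMod ts f α) t.1 e v →
        ∀ u, Sle α v u → qpS (NMod ts f α) d u → BtS (NMod ts f α) t.1 e u := by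
  rintro d - e - v - t ⟨hqp, hbt⟩ u - hqp2
  rcases (qpN_iff hα).1 hqp with ⟨k, hveq, hdk⟩
  rcases (qpN_iff hα).1 hqp2 with ⟨k', hueq, hdk'⟩
  have hkk : k' = k := by
    have := hdk.symm.trans hdk'
    omega
  rw [hueq, hkk, ← hveq]
  exact hbt

theorem NMod_A6 : ∀ d ∈ (NMod ts f α).D (wn α hα 1),
    ∀ v, Sle α (wn α hα 1) v → ∀ t : Fin (ts.s+1),
      BtS (NMod ts f α) t.1 d v → ∀ t' : Fin (ts.s+1), t' ≠ t →
        ¬ BtS (NMod ts f α) t'.1 d v := by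
  rintro d - v hv t hbt t' hne hbt'
  rcases world_cases α hα v with ⟨u, rfl⟩ | hdead
  · rcases (BtN_tile hα).1 hbt with ⟨m, a, hm, hda, hf⟩
    rcases (BtN_tile hα).1 hbt' with ⟨m', a', hm', hda', hf'⟩
    have hmm : m*(ts.s+4) = m'*(ts.s+4) := by
      generalize m*(ts.s+4) = X at hm ⊢
      generalize m'*(ts.s+4) = Y at hm' ⊢
      omega
    obtain rfl : m = m' := Nat.eq_of_mul_eq_mul_right (by omega) hmm
    obtain rfl : a = a' := by omega
    exact hne (hf'.symm.trans hf)
  · exact BtN_dead hα (fun u hu => (hdead u).2 hu) hbt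

theorem NMod_A7 (hT1 : ts.T1 f) :
    ∀ d ∈ (NMod ts f α).D (wn α hα 1), ∀ e ∈ (NMod ts f α).D (wn α hα 1),
    ∀ v, Sle α (wn α hα 1) v → ∀ t : Fin (ts.s+1),
      RlS (NMod ts f α) d e v ∧ BtS (NMod ts f α) t.1 d v →
        ∃ t' : Fin (ts.s+1), ts.right t = ts.left t' ∧ BtS (NMod ts f α) t'.1 e v := by
  rintro d - e - v - t ⟨hrel, hbt⟩
  rcases world_cases α hα v with ⟨u, rfl⟩ | hdead
  · rcases (BtN_tile hα).1 hbt with ⟨m, a, hm, hd, hf⟩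
    rcases (RlN_wn hα).1 hrel with ⟨hc, -⟩ | ⟨a', ha', he⟩
    · exfalso
      have := hd.symm.trans hc
      omega
    · have haa : a' = a := by
        have := ha'.symm.trans hd
        omega
      refine ⟨f (a+1) m, ?_, ?_⟩
      · rw [← hf]
        exact hT1 a m
      · rw [he, haa]
        exact (BtN_tile hα).2 ⟨m, a+1, hm, rfl, rfl⟩
  · exact absurd hbt (BtN_dead hα (fun u hu => (hdead u).2 hu))

theorem NMod_A8 (hT2 : ts.T2 f) :
    ∀ d ∈ (NMod ts f α).D (wn α hα 1), ∀ e ∈ (NMod ts f α).D (wn α hα 1),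
    ∀ v, Sle α (wn α hα 1) v → ∀ t : Fin (ts.s+1),
      qpS (NMod ts f α) d v ∧ BtS (NMod ts f α) t.1 e v →
        ∀ u, Sle α v u →
          (∃ z ∈ (NMod ts f α).D u, RlS (NMod ts f α) d z u ∧ qpS (NMod ts f α) z u) →
            ∃ t' : Fin (ts.s+1), ts.up t = ts.down t' ∧ BtS (NMod ts f α) t'.1 e u := by
  rintro d - e - v - t ⟨hqp, hbt⟩ u - ⟨z, -, hrelz, hqpz⟩
  rcases (qpN_iff hα).1 hqp with ⟨k, hveq, hdk⟩
  rcases (qpN_iff hα).1 hqpz with ⟨k', hueq, hzk⟩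
  rw [hueq] at hrelz
  rw [hveq] at hbt
  rcases (RlN_wn hα).1 hrelz with ⟨hc, -⟩ | ⟨a, ha, hz⟩
  · exfalso
    have := hdk.symm.trans hc
    omega
  · have hak : a = k := by
      have := ha.symm.trans hdk
      omega
    have hk' : k' = k+1 := by
      have h1 := hz.symm.trans hzk
      omega
    rcases (BtN_tile hα).1 hbt with ⟨m, a', hm, hde, hf⟩
    have hmm : m*(ts.s+4) = k*(ts.s+4) := by
      generalize m*(ts.s+4) = X at hm ⊢
      generalize k*(ts.s+4) = Y at hm ⊢
      omega
    have hmk : m = k := Nat.eq_of_mul_eq_mul_right (by omega) hmm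
    refine ⟨f a' (k+1), ?_, ?_⟩
    · rw [← hf, hmk]
      exact hT2 a' k
    · rw [hueq, hk']
      refine (BtN_tile hα).2 ⟨k+1, a', ?_, hde, rfl⟩
      generalize (k+1)*(ts.s+4) = X
      omega

theorem NMod_Bstar (hT1 : ts.T1 f) (hT2 : ts.T2 f) :
    truth (NMod ts f α) (Bstar ts) (wn α hα 1) (fun _ => 0) := by
  refine truth_Bstar.2 ⟨?_, ?_, ?_, ?_, ?_, ?_, ?_, ?_, ?_⟩
  · exact truth_A0.2 (NMod_A0 hα)
  · exact truth_A1.2 (NMod_A1 hα)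
  · exact truth_A2.2 (NMod_A2 hα)
  · exact truth_A3.2 (NMod_A3 hα)
  · exact truth_A4.2 (NMod_A4 hα)
  · exact truth_A5.2 (NMod_A5 hα)
  · exact truth_A6.2 (NMod_A6 hα)
  · exact truth_A7.2 (NMod_A7 hα hT1)
  · exact truth_A8.2 (NMod_A8 hα hT2)

end Verify
section Assemble

variable {W : Type*} {Pred : ℕ → Type}

/-- Re-basing a model on another accessibility relation (with the same data). -/
def reModel {R : W → W → Prop} (M : KModel W R Pred) (S' : W → W → Prop)
    (hmono : ∀ ⦃w v⦄, S' w v → M.D w ⊆ M.D v) : KModel W S' Pred where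
  Dom := M.Dom
  D := M.D
  D_ne := M.D_ne
  D_mono := hmono
  I := M.I
  I_dom := M.I_dom

theorem truth_reModel_iff {R S' : W → W → Prop}
    (hS : ∀ w v : W, S' w v ↔ (w = v ∨ R w v)) (M : KModel W R Pred)
    (hmono : ∀ ⦃w v⦄, S' w v → M.D w ⊆ M.D v) (φ : Fml Pred) (w : W) (g : ℕ → M.Dom) :
    truth M (Fml.plus φ) w g ↔ truth (reModel M S' hmono) φ w g :=
  (truth_eq_truthP M _ w g).trans ((truthP_plus hS φ w g).trans
    (truth_eq_truthP (reModel M S' hmono) φ w g).symm)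

end Assemble

theorem statement14' (ts : TileSet) (α : Ordinal) (hα : Ordinal.omega0 ≤ α)
    (R : {β : Ordinal // β < α} → {β : Ordinal // β < α} → Prop)
    (hR1 : ∀ a b : {β : Ordinal // β < α}, a.1 < b.1 → R a b)
    (hR2 : ∀ a b : {β : Ordinal // β < α}, R a b → a.1 ≤ b.1) :
    (ValidOn R (Fml.neg (Bplus ts)) ↔
      ¬ ∃ f : ℕ → ℕ → Fin (ts.s + 1), ts.T1 f ∧ ts.T2 f) ∧
    (ValidOnC R (Fml.neg (Bplus ts)) ↔
      ¬ ∃ f : ℕ → ℕ → Fin (ts.s + 1), ts.T1 f ∧ ts.T2 f) := by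
  have hS : ∀ w v : {β : Ordinal // β < α}, Sle α w v ↔ (w = v ∨ R w v) := by
    intro w v
    constructor
    · intro h
      rcases lt_or_eq_of_le (h : w.1 ≤ v.1) with h' | h'
      · exact Or.inr (hR1 w v h')
      · exact Or.inl (Subtype.ext h')
    · rintro (rfl | h)
      · exact le_refl _
      · exact hR2 w v h
  -- the countermodel direction: a tiling gives a model of B⁺ over R
  have hcons : ∀ f : ℕ → ℕ → Fin (ts.s + 1), ts.T1 f → ts.T2 f →
      ∃ (M : KModel {β : Ordinal // β < α} R (Letter ts.s)), ConstDom M ∧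
        ¬ trueAt M (wn α hα 1) (Fml.neg (Bplus ts)) := by
    intro f h1 h2
    refine ⟨reModel (NMod ts f α) R (fun _ _ _ => Set.Subset.refl _), fun _ _ => rfl, ?_⟩
    intro hta
    have hmono2 : ∀ ⦃w v⦄, Sle α w v →
        (reModel (NMod ts f α) R (fun _ _ _ => Set.Subset.refl _)).D w ⊆
          (reModel (NMod ts f α) R (fun _ _ _ => Set.Subset.refl _)).D v :=
      fun _ _ _ => Set.Subset.refl _
    have H1 : truth (NMod ts f α) (Bstar ts) (wn α hα 1) (fun _ => (0:ℕ)) :=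
      NMod_Bstar hα h1 h2
    have H2 : truth (reModel (reModel (NMod ts f α) R (fun _ _ _ => Set.Subset.refl _))
        (Sle α) hmono2) (Bstar ts) (wn α hα 1) (fun _ => (0:ℕ)) :=
      (truth_eq_truthP _ _ _ _).2 ((truth_eq_truthP _ _ _ _).1 H1)
    have H3 : truth (reModel (NMod ts f α) R (fun _ _ _ => Set.Subset.refl _))
        (Fml.plus (Bstar ts)) (wn α hα 1) (fun _ => (0:ℕ)) :=
      (truth_reModel_iff hS _ hmono2 _ _ _).2 H2
    exact hta (fun _ => (0:ℕ)) (fun _ => trivial) H3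
  -- the extraction direction
  have hext : ∀ (M : KModel {β : Ordinal // β < α} R (Letter ts.s)) (w : {β : Ordinal // β < α})
      (g : ℕ → M.Dom), truth M (Bplus ts) w g →
        ∃ f : ℕ → ℕ → Fin (ts.s + 1), ts.T1 f ∧ ts.T2 f := by
    intro M w g hB
    have hmono : ∀ ⦃w v⦄, Sle α w v → M.D w ⊆ M.D v := by
      intro w v hwv
      rcases (hS w v).1 hwv with rfl | h
      · exact Set.Subset.refl _
      · exact M.D_mono h
    have hB' : truth (reModel M (Sle α) hmono) (Bstar ts) w g :=
      (truth_reModel_iff hS M hmono (Bstar ts) w g).1 hB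
    exact extraction (M := reModel M (Sle α) hmono) (Sle_refl α) (fun {a b c} h1 h2 => Sle_trans α h1 h2) w g hB'
  constructor
  · constructor
    · intro hval hex
      rcases hex with ⟨f, h1, h2⟩
      rcases hcons f h1 h2 with ⟨M, -, hM⟩
      exact hM (hval M (wn α hα 1))
    · intro hnt M w g hg hB
      exact hnt (hext M w g hB)
  · constructor
    · intro hval hex
      rcases hex with ⟨f, h1, h2⟩
      rcases hcons f h1 h2 with ⟨M, hMc, hM⟩
      exact hM (hval M hMc (wn α hα 1))
    · intro hnt M _ w g hg hB
      exact hnt (hext M w g hB)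
/-- let `α` be an infinite ordinal, `<` ordinal membership on `α`,
`≤` its reflexive closure, and `R` a relation with `< ⊆ R ⊆ ≤`. Then `¬B⁺ ∈ L(α,R)`
iff there is no function `f : ℕ×ℕ → T` satisfying (T1) and (T2), and the same holds
for `L_c(α,R)`. -/
theorem statement14 (ts : TileSet) (α : Ordinal) (hα : Ordinal.omega0 ≤ α)
    (R : {β : Ordinal // β < α} → {β : Ordinal // β < α} → Prop)
    (hR1 : ∀ a b : {β : Ordinal // β < α}, a.1 < b.1 → R a b)
    (hR2 : ∀ a b : {β : Ordinal // β < α}, R a b → a.1 ≤ b.1) :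
    (ValidOn R (Fml.neg (Bplus ts)) ↔
      ¬ ∃ f : ℕ → ℕ → Fin (ts.s + 1), ts.T1 f ∧ ts.T2 f) ∧
    (ValidOnC R (Fml.neg (Bplus ts)) ↔
      ¬ ∃ f : ℕ → ℕ → Fin (ts.s + 1), ts.T1 f ∧ ts.T2 f) := by
  exact statement14' ts α hα R hR1 hR2


end FOML
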